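/- arXiv:2409.19087 — 6 statements merged into one kernel-verified Lean document; each statement's English description precedes it below -/
import Mathlib

section
/- Let k, m, n be positive integers with k dividing m and n > m/k. Define the m×n matrix A by: for each column i with 1 ≤ i ≤ m/k, A_{j,i} = 1/√k if (i−1)k < j ≤ i·k and A_{j,i} = 0 otherwise; for each column i with m/k < i ≤ n, A_{j,i} = 1/√m for every row j ∈ [m]. Then A has rank m/k and A is 1-incoherent (the coherence of its column space equals 1). -/
/-! The columns of index `i < m / k` are the vectors `bᵢ = k^{-1/2} 𝟙_{block i}`, which are
orthonormal since the blocks are disjoint of size `k`; every other column is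
`m^{-1/2} 𝟙 = √(k/m) ∑ᵢ bᵢ`, so the column space has orthonormal basis `(bᵢ)` and dimension
`m / k`. Projecting `e_j` onto it leaves only the block containing `j`, so
`‖P e_j‖² = ⟪b_{j/k}, e_j⟫² = 1/k` for every `j`, and the coherence is `(m / (m/k)) · (1/k) = 1`. -/

open scoped BigOperators

/-- The coherence `μ(U)` of a subspace `U` of `ℝ^m`:
`μ(U) = (m / dim U) · max_{j ∈ [m]} ‖P_U e_j‖₂²`. -/
noncomputable def coherence {m : ℕ} (U : Submodule ℝ (EuclideanSpace ℝ (Fin m))) : ℝ :=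
  ((m : ℝ) / (Module.finrank ℝ U : ℝ)) *
    ⨆ j : Fin m,
      ‖(U.orthogonalProjection (EuclideanSpace.single j 1) : EuclideanSpace ℝ (Fin m))‖ ^ 2

/-- The column space of an `m × n` real matrix, as a subspace of `ℝ^m`. -/
noncomputable def colSpace {m n : ℕ} (A : Matrix (Fin m) (Fin n) ℝ) :
    Submodule ℝ (EuclideanSpace ℝ (Fin m)) :=
  Submodule.span ℝ (Set.range fun i : Fin n => (EuclideanSpace.equiv (Fin m) ℝ).symm fun j => A j i)

open Module Submodule
open scoped RealInnerProductSpace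

lemma Orthonormal.starProjection_span_eq_sum {E ι : Type*} [NormedAddCommGroup E]
    [InnerProductSpace ℝ E] [Fintype ι] {v : ι → E} [(span ℝ (Set.range v)).HasOrthogonalProjection]
    (hv : Orthonormal ℝ v) (x : E) :
    (span ℝ (Set.range v)).starProjection x = ∑ i, ⟪v i, x⟫ • v i := by
  refine eq_starProjection_of_mem_of_inner_eq_zero
    (sum_mem fun i _ => smul_mem _ _ (subset_span ⟨i, rfl⟩)) fun w hw => ?_
  induction hw using span_induction with
  | mem _ hw =>
    obtain ⟨i, rfl⟩ := hw
    rw [inner_sub_left, hv.inner_left_fintype, real_inner_comm]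
    simp
  | zero => exact inner_zero_right _
  | add _ _ _ _ hx hy => rw [inner_add_right, hx, hy, add_zero]
  | smul _ _ _ hx => rw [real_inner_smul_right, hx, mul_zero]

lemma Orthonormal.norm_sq_starProjection_span {E ι : Type*} [NormedAddCommGroup E]
    [InnerProductSpace ℝ E] [Fintype ι] {v : ι → E} [(span ℝ (Set.range v)).HasOrthogonalProjection]
    (hv : Orthonormal ℝ v) (x : E) :
    ‖(span ℝ (Set.range v)).starProjection x‖ ^ 2 = ∑ i, ⟪v i, x⟫ ^ 2 := by
  rw [← real_inner_self_eq_norm_sq, hv.starProjection_span_eq_sum, hv.inner_sum]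
  simp [sq]

lemma coherence_eq_of_forall_norm_sq_starProjection_eq {m : ℕ} (hm : 0 < m)
    (U : Submodule ℝ (EuclideanSpace ℝ (Fin m))) {c : ℝ}
    (hc : ∀ j, ‖U.starProjection (EuclideanSpace.single j 1)‖ ^ 2 = c) :
    coherence U = m / finrank ℝ U * c := by
  have : Nonempty (Fin m) := ⟨⟨0, hm⟩⟩
  simp only [coherence, coe_orthogonalProjectionOnto_apply, hc, ciSup_const]

lemma Matrix.rank_eq_finrank_colSpace {m n : ℕ} (A : Matrix (Fin m) (Fin n) ℝ) :
    A.rank = finrank ℝ (colSpace A) := by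
  rw [Matrix.rank_eq_finrank_span_cols, colSpace, ← LinearEquiv.finrank_map_eq
    (EuclideanSpace.equiv (Fin m) ℝ).symm.toLinearEquiv, map_span, ← Set.range_comp]
  rfl

lemma Nat.div_eq_iff_mul_le_and_lt {k i j : ℕ} (hk : 0 < k) :
    j / k = i ↔ i * k ≤ j ∧ j < (i + 1) * k := by
  rw [Nat.div_eq_iff hk, add_one_mul]; omega

lemma Nat.card_filter_range_div_eq {k m i : ℕ} (hk : 0 < k) (hi : i < m / k) :
    (Finset.range m |>.filter (· / k = i)).card = k := by
  have hle : (i + 1) * k ≤ m := (Nat.le_div_iff_mul_le hk).1 hi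
  have : (Finset.range m |>.filter (· / k = i)) = Finset.Ico (i * k) ((i + 1) * k) := by
    ext j
    simp only [Finset.mem_filter, Finset.mem_range, Finset.mem_Ico,
      Nat.div_eq_iff_mul_le_and_lt hk]
    omega
  rw [this, Nat.card_Ico, add_one_mul, Nat.add_sub_cancel_left]

noncomputable def blockVec (m k i : ℕ) : EuclideanSpace ℝ (Fin m) :=
  WithLp.toLp 2 fun j => if (j : ℕ) / k = i then 1 / √k else 0

lemma blockVec_apply (m k i : ℕ) (j : Fin m) :
    blockVec m k i j = if (j : ℕ) / k = i then 1 / √k else 0 := rfl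

lemma orthonormal_blockVec {k : ℕ} (hk : 0 < k) (m : ℕ) :
    Orthonormal ℝ fun i : Fin (m / k) => blockVec m k i := by
  rw [orthonormal_iff_ite]
  intro i i'
  simp only [PiLp.inner_apply, blockVec_apply, RCLike.inner_apply, conj_trivial,
    ite_zero_mul_ite_zero]
  split_ifs with h
  · subst h
    have hk' : (0 : ℝ) < k := by exact_mod_cast hk
    simp only [and_self]
    rw [Fin.sum_univ_eq_sum_range (fun j => if j / k = i then _ else 0), ← Finset.sum_filter,
      Finset.sum_const, Nat.card_filter_range_div_eq hk i.2, nsmul_eq_mul, div_mul_div_comm,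
      one_mul, Real.mul_self_sqrt hk'.le, mul_one_div_cancel hk'.ne']
  · refine Finset.sum_eq_zero fun j _ => if_neg ?_
    rintro ⟨h₁, h₂⟩
    exact h (Fin.ext (h₂.symm.trans h₁))

lemma inner_blockVec_single (m k i : ℕ) (j : Fin m) :
    ⟪blockVec m k i, EuclideanSpace.single j 1⟫ = blockVec m k i j := by
  simp [EuclideanSpace.inner_single_right]

lemma blockVec_apply_of_ne {k m : ℕ} (hdvd : k ∣ m) {i : Fin (m / k)} {j : Fin m}
    (h : i ≠ ⟨j / k, Nat.div_lt_div_of_lt_of_dvd hdvd j.2⟩) : blockVec m k i j = 0 :=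
  if_neg fun h' => h (Fin.ext h'.symm)

lemma sum_blockVec {k m : ℕ} (hdvd : k ∣ m) :
    ∑ i : Fin (m / k), blockVec m k i = WithLp.toLp 2 fun _ => 1 / √k := by
  ext j
  rw [WithLp.ofLp_sum, Finset.sum_apply,
    Fintype.sum_eq_single _ fun i => blockVec_apply_of_ne hdvd]
  exact if_pos rfl

lemma sum_inner_blockVec_single_sq {k m : ℕ} (hdvd : k ∣ m) (j : Fin m) :
    ∑ i : Fin (m / k), ⟪blockVec m k i, EuclideanSpace.single j 1⟫ ^ 2 = 1 / k := by
  simp only [inner_blockVec_single]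
  rw [Fintype.sum_eq_single _ fun i hi => by rw [blockVec_apply_of_ne hdvd hi, sq, zero_mul],
    blockVec_apply, if_pos rfl, div_pow, one_pow, Real.sq_sqrt (Nat.cast_nonneg k)]

lemma colSpace_eq_span_blockVec {k m n : ℕ} (hk : 0 < k) (hdvd : k ∣ m) (hn : m / k < n)
    (A : Matrix (Fin m) (Fin n) ℝ)
    (hA1 : ∀ (j : Fin m) (i : Fin n), (i : ℕ) < m / k →
      A j i =
        if (i : ℕ) * k ≤ (j : ℕ) ∧ (j : ℕ) < ((i : ℕ) + 1) * k then 1 / Real.sqrt k else 0)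
    (hA2 : ∀ (j : Fin m) (i : Fin n), m / k ≤ (i : ℕ) → A j i = 1 / Real.sqrt m) :
    colSpace A = span ℝ (Set.range fun i : Fin (m / k) => blockVec m k i) := by
  have hblock (i : Fin n) (hi : (i : ℕ) < m / k) :
      (WithLp.toLp 2 fun j => A j i) = blockVec m k i := by
    refine congrArg (WithLp.toLp 2) (funext fun j => ?_)
    rw [hA1 j i hi]
    exact if_congr (Nat.div_eq_iff_mul_le_and_lt hk).symm rfl rfl
  have huniform (i : Fin n) (hi : m / k ≤ (i : ℕ)) :
      (WithLp.toLp 2 fun j => A j i) = (√k / √m) • ∑ i' : Fin (m / k), blockVec m k i' := by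
    rw [sum_blockVec hdvd, ← WithLp.toLp_smul]
    refine congrArg (WithLp.toLp 2) (funext fun j => ?_)
    rw [hA2 j i hi, Pi.smul_apply, smul_eq_mul]
    field_simp
  apply le_antisymm
  · rw [colSpace, span_le]
    rintro _ ⟨i, rfl⟩
    rcases lt_or_ge (i : ℕ) (m / k) with hi | hi
    · exact subset_span ⟨⟨i, hi⟩, (hblock i hi).symm⟩
    · change WithLp.toLp 2 (fun j => A j i) ∈ _
      rw [huniform i hi]
      exact smul_mem _ _ (sum_mem fun i' _ => subset_span ⟨i', rfl⟩)
  · rw [span_le]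
    rintro _ ⟨i, rfl⟩
    exact subset_span ⟨⟨i, i.2.trans hn⟩, hblock _ i.2⟩

/-- **Lemma 3.1.** Let `k ∣ m`, `n > m/k`. The `m × n` matrix whose first `m/k` columns are the
indicators (scaled by `1/√k`) of consecutive blocks of `k` items and whose remaining columns are
the uniform vector `1/√m` has rank `m/k` and its column space has coherence exactly `1`
(it is `1`-incoherent). (Columns are `0`-indexed: column `i < m/k` is supported on rows
`i·k ≤ j < (i+1)·k`.) -/
theorem block_matrix_rank_and_incoherence {k m n : ℕ}
    (hk : 0 < k) (hm : 0 < m) (hdvd : k ∣ m) (hn : m / k < n)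
    (A : Matrix (Fin m) (Fin n) ℝ)
    (hA1 : ∀ (j : Fin m) (i : Fin n), (i : ℕ) < m / k →
      A j i =
        if (i : ℕ) * k ≤ (j : ℕ) ∧ (j : ℕ) < ((i : ℕ) + 1) * k then 1 / Real.sqrt k else 0)
    (hA2 : ∀ (j : Fin m) (i : Fin n), m / k ≤ (i : ℕ) → A j i = 1 / Real.sqrt m) :
    A.rank = m / k ∧ coherence (colSpace A) = 1 := by
  have hb := orthonormal_blockVec hk m
  have hcol := colSpace_eq_span_blockVec hk hdvd hn A hA1 hA2
  have hdim : finrank ℝ (colSpace A) = m / k := by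
    rw [hcol, finrank_span_eq_card hb.linearIndependent, Fintype.card_fin]
  refine ⟨(Matrix.rank_eq_finrank_colSpace A).trans hdim, ?_⟩
  rw [coherence_eq_of_forall_norm_sq_starProjection_eq hm _ (c := 1 / k), hdim]
  · have hk' : (k : ℝ) ≠ 0 := by exact_mod_cast hk.ne'
    have hm' : (m : ℝ) ≠ 0 := by exact_mod_cast hm.ne'
    rw [Nat.cast_div hdvd hk']
    field_simp
  · intro j
    rw [hcol, hb.norm_sq_starProjection_span, sum_inner_blockVec_single_sq hdvd]
end

section
/- Fix a budget rule g : ℝ₊^C → ℝ₊^C and any Highest-Bidder-Wins auction with budget rule g (i.e., any tie-breaking rule). Let k, m be positive integers with k dividing m, and consider the instance with m items and C = m centers, each representing ℓ = m/k individuals, where center one's i-th individual values items (i−1)k+1,…,ik at 1/√k each and all other items at 0, and every individual of every other center values all m items at 1/√m. (This valuation matrix has rank m/k and is 1-incoherent.) Then at every pure Nash equilibrium bid profile, the total fraction of items received by center one is at most 1, and consequently the induced allocation ỹ satisfies GMW_1(y*)/GMW_1(ỹ) ≥ (m/√k)/(√m + 1/√k − 1/√m), where y* maximizes GMW_1 over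 feasible allocations. In particular the utilitarian Price of Anarchy of every Highest-Bidder-Wins auction on instances with rank·incoherence equal to ℓ is Ω(√ℓ). -/
open scoped BigOperators

/-- An allocation is feasible if all fractions are nonnegative and each item is
allocated at most once in total. -/
def Feasible {m n : ℕ} (y : Fin m → Fin n → ℝ) : Prop :=
  (∀ j i, 0 ≤ y j i) ∧ ∀ j, ∑ i, y j i ≤ 1

/-- The (additive) utility of individual `i` under allocation `y`:
`u_i(y) = Σ_j A_{j,i} · y_{j,i}`. -/
noncomputable def util {m n : ℕ} (A : Matrix (Fin m) (Fin n) ℝ)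
    (y : Fin m → Fin n → ℝ) (i : Fin n) : ℝ :=
  ∑ j, A j i * y j i

/-- The generalized `p`-mean welfare `GMW_p(y) = ((1/n) Σᵢ uᵢ(y)^p)^{1/p}`
(real powers). -/
noncomputable def GMW {m n : ℕ} (p : ℝ) (A : Matrix (Fin m) (Fin n) ℝ)
    (y : Fin m → Fin n → ℝ) : ℝ :=
  ((1 / (n : ℝ)) * ∑ i, util A y i ^ p) ^ (1 / p)

open scoped Classical

/-- The set of individuals represented by center `c`. -/
def Ic {n C : ℕ} (ctr : Fin n → Fin C) (c : Fin C) : Finset (Fin n) :=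
  Finset.univ.filter fun i => ctr i = c

/-- Center `c` respects its budget: the sum of its bids over the items on which it is a
(weakly) highest bidder is at most its budget `B c`. -/
def BudgetOK {m C : ℕ} (B : Fin C → ℝ) (b : Fin m → Fin C → ℝ) (c : Fin C) : Prop :=
  ∑ j ∈ Finset.univ.filter (fun j : Fin m => ∀ c', b j c' ≤ b j c), b j c ≤ B c

/-- `X` is a Highest-Bidder-Wins allocation rule with budgets `B` (for some tie-breaking rule):
on nonnegative bids it produces nonnegative fractions summing to at most one per item; only
(weakly) highest bidders receive a positive fraction of an item; an item with a positive bid is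
fully allocated provided all its (weakly) highest bidders respect their budgets; a strict
highest bidder respecting its budget receives the item in full; items with no positive bid are
unallocated; and a center violating its budget constraint receives nothing. -/
structure IsHBW {m C : ℕ} (B : Fin C → ℝ)
    (X : (Fin m → Fin C → ℝ) → Fin m → Fin C → ℝ) : Prop where
  nonneg : ∀ b, (∀ j c, 0 ≤ b j c) → ∀ j c, 0 ≤ X b j c
  sum_le_one : ∀ b, (∀ j c, 0 ≤ b j c) → ∀ j, ∑ c, X b j c ≤ 1
  highest : ∀ b, (∀ j c, 0 ≤ b j c) → ∀ j c, X b j c ≠ 0 → ∀ c', b j c' ≤ b j c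
  full : ∀ b, (∀ j c, 0 ≤ b j c) → ∀ j, (∃ c, 0 < b j c) →
    (∀ c, (∀ c', b j c' ≤ b j c) → BudgetOK B b c) → ∑ c, X b j c = 1
  strict_win : ∀ b, (∀ j c, 0 ≤ b j c) → ∀ j c, (∀ c', c' ≠ c → b j c' < b j c) →
    BudgetOK B b c → X b j c = 1
  no_bid : ∀ b, (∀ j c, 0 ≤ b j c) → ∀ j, (∀ c, b j c = 0) → ∀ c, X b j c = 0
  over_budget : ∀ b, (∀ j c, 0 ≤ b j c) → ∀ c, ¬ BudgetOK B b c → ∀ j, X b j c = 0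

/-- The best objective value center `c` (with individual set `S`) can achieve by redistributing
the item fractions `xc` it received among its own individuals. -/
noncomputable def centerBest {m n : ℕ} (obj : (Fin m → Fin n → ℝ) → ℝ)
    (S : Finset (Fin n)) (xc : Fin m → ℝ) : ℝ :=
  sSup {v : ℝ | ∃ z : Fin m → Fin n → ℝ, (∀ j i, 0 ≤ z j i) ∧
    (∀ j, ∑ i ∈ S, z j i ≤ xc j) ∧ v = obj z}

/-- `b` is a pure Nash equilibrium of the auction with allocation rule `X`: bids are
nonnegative, and no center `c` can strictly increase the best objective value achievable from
its received fractions by unilaterally changing its (nonnegative) bids. -/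
def HBWEquilibrium {m n C : ℕ} (X : (Fin m → Fin C → ℝ) → Fin m → Fin C → ℝ)
    (obj : Fin C → (Fin m → Fin n → ℝ) → ℝ) (ctr : Fin n → Fin C)
    (b : Fin m → Fin C → ℝ) : Prop :=
  (∀ j c, 0 ≤ b j c) ∧
  ∀ (c : Fin C) (β : Fin m → ℝ), (∀ j, 0 ≤ β j) →
    centerBest (obj c) (Ic ctr c)
        (fun j => X (fun j' => Function.update (b j') c (β j')) j c) ≤
      centerBest (obj c) (Ic ctr c) (fun j => X b j c)

/-- `y` is an allocation induced by giving each center `c` the item fractions `xc c` and letting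
it redistribute them among its own individuals so as to maximize its objective `obj c`. -/
def Induced {m n C : ℕ} (obj : Fin C → (Fin m → Fin n → ℝ) → ℝ) (ctr : Fin n → Fin C)
    (xc : Fin C → Fin m → ℝ) (y : Fin m → Fin n → ℝ) : Prop :=
  (∀ j i, 0 ≤ y j i) ∧ (∀ c j, ∑ i ∈ Ic ctr c, y j i ≤ xc c j) ∧
  ∀ c z, (∀ (j : Fin m) (i : Fin n), 0 ≤ z j i) →
    (∀ j, ∑ i ∈ Ic ctr c, z j i ≤ xc c j) → obj c z ≤ obj c y

/-- Utilitarian welfare `GMW_1(y) = (1/n) Σᵢ uᵢ(y)`. -/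
noncomputable def GMW1 {m n : ℕ} (A : Matrix (Fin m) (Fin n) ℝ)
    (y : Fin m → Fin n → ℝ) : ℝ :=
  (1 / (n : ℝ)) * ∑ i, util A y i

/-- Center `c`'s utilitarian objective `GMW_{c,1}(y) = (1/|I_c|) Σ_{i∈I_c} uᵢ(y)`. -/
noncomputable def GMW1c {m n C : ℕ} (A : Matrix (Fin m) (Fin n) ℝ)
    (ctr : Fin n → Fin C) (c : Fin C) (y : Fin m → Fin n → ℝ) : ℝ :=
  (1 / ((Ic ctr c).card : ℝ)) * ∑ i ∈ Ic ctr c, util A y i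

/-! At an equilibrium, center `0` holds at most one unit of items. Otherwise it wins two items
with positive bids within its budget, so each of its winning bids is strictly below the smallest
budget; as there are as many centers as items, some other center holds less than one unit, and by
spending its whole budget on one of center `0`'s items it would win that item outright. Since its
individuals value all items equally, its objective is proportional to the amount it holds, so this
deviation is strictly profitable.

Hence center `0`'s individuals, who value items at most `1/√k`, receive at most one unit, and all
others, at `1/√m`, share at most `m` units: the induced welfare is at most
`(√m + 1/√k - 1/√m)/n`, whereas giving every item to the center-`0` individual owning its block
yields `(m/√k)/n`. -/

open Finset

theorem exists_ne_pos_pos_of_one_lt_sum {ι : Type*} [Fintype ι] {f : ι → ℝ}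
    (hf : ∀ i, f i ≤ 1) (h : 1 < ∑ i, f i) : ∃ i j, i ≠ j ∧ 0 < f i ∧ 0 < f j := by
  obtain ⟨i, -, hi⟩ : ∃ i ∈ univ, (0 : ℝ) < f i :=
    exists_lt_of_sum_lt (by simpa using zero_lt_one.trans h)
  obtain ⟨j, hj, hfj⟩ : ∃ j ∈ univ.erase i, (0 : ℝ) < f j := by
    refine exists_lt_of_sum_lt ?_
    have := add_sum_erase univ f (mem_univ i)
    rw [sum_const_zero]
    linarith [hf i]
  exact ⟨j, i, ne_of_mem_erase hj, hfj, hi⟩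

theorem update_bids_nonneg {m C : ℕ} {b : Fin m → Fin C → ℝ} (hb : ∀ j c, 0 ≤ b j c)
    {c : Fin C} {β : Fin m → ℝ} (hβ : ∀ j, 0 ≤ β j) (j : Fin m) (c' : Fin C) :
    0 ≤ Function.update (b j) c (β j) c' := by
  rcases eq_or_ne c' c with rfl | h
  · simpa using hβ j
  · simpa [h] using hb j c'

namespace IsHBW

variable {m C : ℕ} {B : Fin C → ℝ} {X : (Fin m → Fin C → ℝ) → Fin m → Fin C → ℝ}
  {b : Fin m → Fin C → ℝ}

theorem le_one (hX : IsHBW B X) (hb : ∀ j c, 0 ≤ b j c) (j : Fin m) (c : Fin C) :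
    X b j c ≤ 1 :=
  (single_le_sum (fun c' _ => hX.nonneg b hb j c') (mem_univ c)).trans (hX.sum_le_one b hb j)

theorem sum_sum_le (hX : IsHBW B X) (hb : ∀ j c, 0 ≤ b j c) : ∑ c, ∑ j, X b j c ≤ m := by
  rw [sum_comm]
  calc ∑ j, ∑ c, X b j c ≤ ∑ _j : Fin m, (1 : ℝ) := sum_le_sum fun j _ => hX.sum_le_one b hb j
    _ = m := by simp

theorem bid_pos_of_pos (hX : IsHBW B X) (hb : ∀ j c, 0 ≤ b j c) {j : Fin m} {c : Fin C}
    (h : 0 < X b j c) : 0 < b j c := by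
  refine (hb j c).lt_of_ne fun h0 => h.ne' (hX.no_bid b hb j (fun c' => ?_) c)
  exact le_antisymm (h0 ▸ hX.highest b hb j c h.ne' c') (hb j c')

theorem budgetOK_of_pos (hX : IsHBW B X) (hb : ∀ j c, 0 ≤ b j c) {j : Fin m} {c : Fin C}
    (h : 0 < X b j c) : BudgetOK B b c := by
  by_contra hc
  exact h.ne' (hX.over_budget b hb c hc j)

theorem exists_bids_lt_budget (hX : IsHBW B X) (hb : ∀ j c, 0 ≤ b j c) {c : Fin C}
    (h : 1 < ∑ j, X b j c) : ∃ j, ∀ c', b j c' < B c := by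
  obtain ⟨j₁, j₂, hne, h₁, h₂⟩ := exists_ne_pos_pos_of_one_lt_sum (hX.le_one hb · c) h
  have hwins : ∀ j, 0 < X b j c → j ∈ univ.filter fun j => ∀ c', b j c' ≤ b j c :=
    fun j hj => mem_filter.2 ⟨mem_univ j, hX.highest b hb j c hj.ne'⟩
  have hpair : b j₁ c + b j₂ c ≤ B c :=
    calc b j₁ c + b j₂ c = ∑ j ∈ {j₁, j₂}, b j c := (sum_pair (f := fun j => b j c) hne).symm
      _ ≤ ∑ j ∈ univ.filter fun j => ∀ c', b j c' ≤ b j c, b j c :=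
        sum_le_sum_of_subset_of_nonneg
          (insert_subset (hwins j₁ h₁) (singleton_subset_iff.2 (hwins j₂ h₂))) fun j _ _ => hb j c
      _ ≤ B c := hX.budgetOK_of_pos hb h₁
  exact ⟨j₁, fun c' => by linarith [hX.highest b hb j₁ c h₁.ne' c', hX.bid_pos_of_pos hb h₂]⟩

theorem exists_ne_sum_lt_one (hX : IsHBW B X) (hb : ∀ j c, 0 ≤ b j c) (hmC : m ≤ C) {c₀ : Fin C}
    (h : 1 < ∑ j, X b j c₀) : ∃ c ≠ c₀, ∑ j, X b j c < 1 := by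
  by_contra! hge
  have hrest : ((univ.erase c₀).card : ℝ) ≤ ∑ c ∈ univ.erase c₀, ∑ j, X b j c := by
    simpa using card_nsmul_le_sum (univ.erase c₀) _ 1 fun c hc => hge c (ne_of_mem_erase hc)
  have hcard : ((univ.erase c₀).card : ℝ) + 1 = C := by
    exact_mod_cast (card_erase_add_one (mem_univ c₀)).trans (card_fin C)
  have hsplit := add_sum_erase univ (fun c => ∑ j, X b j c) (mem_univ c₀)
  have hmC' : (m : ℝ) ≤ C := by exact_mod_cast hmC
  linarith [hX.sum_sum_le hb]

theorem update_single_wins (hX : IsHBW B X) (hb : ∀ j c, 0 ≤ b j c) {j : Fin m} {c : Fin C}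
    (hj : ∀ c', b j c' < B c) :
    X (fun j' => Function.update (b j') c ((Pi.single j (B c) : Fin m → ℝ) j')) j c = 1 := by
  have hβ : ∀ j', 0 ≤ (Pi.single j (B c) : Fin m → ℝ) j' := fun j' =>
    (Pi.single_nonneg.2 ((hb j c).trans (hj c).le) : (0 : Fin m → ℝ) ≤ Pi.single j (B c)) j'
  have hb' := update_bids_nonneg hb (c := c) hβ
  refine hX.strict_win _ hb' j c (fun c' hc' => by simpa [hc'] using hj c') ?_
  calc _ ≤ ∑ j', Function.update (b j') c ((Pi.single j (B c) : Fin m → ℝ) j') c :=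
        sum_le_sum_of_subset_of_nonneg (filter_subset _ _) fun j' _ _ => hb' j' c
    _ = B c := by simp

end IsHBW

section UniformCenter

variable {m n C : ℕ} {A : Matrix (Fin m) (Fin n) ℝ} {ctr : Fin n → Fin C} {c : Fin C} {a : ℝ}

theorem sum_util_eq_of_uniform {S : Finset (Fin n)} (hA : ∀ j, ∀ i ∈ S, A j i = a)
    (z : Fin m → Fin n → ℝ) : ∑ i ∈ S, util A z i = a * ∑ j, ∑ i ∈ S, z j i := by
  simp only [util, mul_sum]
  rw [sum_comm]
  exact sum_congr rfl fun j _ => sum_congr rfl fun i hi => by rw [hA j i hi]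

theorem centerBest_GMW1c_eq (hne : (Ic ctr c).Nonempty) (ha : 0 ≤ a)
    (hA : ∀ j, ∀ i ∈ Ic ctr c, A j i = a) {x : Fin m → ℝ} (hx : ∀ j, 0 ≤ x j) :
    centerBest (GMW1c A ctr c) (Ic ctr c) x = 1 / (Ic ctr c).card * (a * ∑ j, x j) := by
  obtain ⟨i₀, hi₀⟩ := hne
  refine IsGreatest.csSup_eq
    ⟨⟨fun j i => if i = i₀ then x j else 0, fun j i => ?_, fun j => ?_, ?_⟩, ?_⟩
  · dsimp only
    split_ifs
    exacts [hx j, le_rfl]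
  · simp [hi₀]
  · simp [GMW1c, sum_util_eq_of_uniform hA, hi₀]
  · rintro _ ⟨z, -, hzx, rfl⟩
    rw [GMW1c, sum_util_eq_of_uniform hA]
    gcongr with j
    exact hzx j

theorem HBWEquilibrium.sum_le_sum_of_uniform {B : Fin C → ℝ}
    {X : (Fin m → Fin C → ℝ) → Fin m → Fin C → ℝ} {b : Fin m → Fin C → ℝ} (hX : IsHBW B X)
    (heq : HBWEquilibrium X (fun c y => GMW1c A ctr c y) ctr b) (hne : (Ic ctr c).Nonempty)
    (ha : 0 < a) (hA : ∀ j, ∀ i ∈ Ic ctr c, A j i = a) {β : Fin m → ℝ} (hβ : ∀ j, 0 ≤ β j) :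
    ∑ j, X (fun j' => Function.update (b j') c (β j')) j c ≤ ∑ j, X b j c := by
  have hdev := heq.2 c β hβ
  rw [centerBest_GMW1c_eq hne ha.le hA fun j => hX.nonneg _ (update_bids_nonneg heq.1 hβ) j c,
    centerBest_GMW1c_eq hne ha.le hA fun j => hX.nonneg b heq.1 j c] at hdev
  have hcard : (0 : ℝ) < 1 / (Ic ctr c).card := by simpa using hne.card_pos
  exact le_of_mul_le_mul_left (le_of_mul_le_mul_left hdev hcard) ha

end UniformCenter

theorem IsHBW.sum_le_one_of_equilibrium {m n C : ℕ} {B : Fin C → ℝ}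
    {X : (Fin m → Fin C → ℝ) → Fin m → Fin C → ℝ} {b : Fin m → Fin C → ℝ}
    {A : Matrix (Fin m) (Fin n) ℝ} {ctr : Fin n → Fin C} (hX : IsHBW B X) (hmC : m ≤ C)
    (heq : HBWEquilibrium X (fun c y => GMW1c A ctr c y) ctr b) {c₀ : Fin C}
    (hmin : ∀ c, B c₀ ≤ B c)
    (huniform : ∀ c ≠ c₀, (Ic ctr c).Nonempty ∧ ∃ a > 0, ∀ j, ∀ i ∈ Ic ctr c, A j i = a) :
    ∑ j, X b j c₀ ≤ 1 := by
  by_contra! h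
  obtain ⟨j, hj⟩ := hX.exists_bids_lt_budget heq.1 h
  obtain ⟨c, hc, hlt⟩ := hX.exists_ne_sum_lt_one heq.1 hmC h
  obtain ⟨hne, a, ha, hA⟩ := huniform c hc
  have hwin := hX.update_single_wins heq.1 fun c' => (hj c').trans_le (hmin c)
  have hβ : ∀ j', 0 ≤ (Pi.single j (B c) : Fin m → ℝ) j' := fun j' =>
    (Pi.single_nonneg.2 (((heq.1 j c).trans (hj c).le).trans (hmin c)) :
      (0 : Fin m → ℝ) ≤ Pi.single j (B c)) j'
  have hgain := heq.sum_le_sum_of_uniform hX hne ha hA hβ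
  set b' := fun j' => Function.update (b j') c ((Pi.single j (B c) : Fin m → ℝ) j')
  have hheld := single_le_sum (f := fun j' => X b' j' c)
    (fun j' _ => hX.nonneg b' (update_bids_nonneg heq.1 hβ) j' c) (mem_univ j)
  linarith

section Welfare

variable {m n : ℕ} {A : Matrix (Fin m) (Fin n) ℝ}

theorem util_le_mul_sum {y : Fin m → Fin n → ℝ} {i : Fin n} {α : ℝ} (hA : ∀ j, A j i ≤ α)
    (hy : ∀ j, 0 ≤ y j i) : util A y i ≤ α * ∑ j, y j i := by
  rw [util, mul_sum]
  exact sum_le_sum fun j _ => mul_le_mul_of_nonneg_right (hA j) (hy j)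

theorem sum_util_le_of_two_levels {y : Fin m → Fin n → ℝ} (S : Finset (Fin n)) {α β : ℝ}
    (hβ : 0 ≤ β) (hβα : β ≤ α) (hAS : ∀ j, ∀ i ∈ S, A j i ≤ α) (hASc : ∀ j, ∀ i ∉ S, A j i ≤ β)
    (hy : ∀ j i, 0 ≤ y j i) (hitems : ∀ j, ∑ i, y j i ≤ 1) (hS : ∑ i ∈ S, ∑ j, y j i ≤ 1) :
    ∑ i, util A y i ≤ β * m + (α - β) := by
  have htotal : ∑ i, ∑ j, y j i ≤ m := by
    rw [sum_comm]
    simpa using sum_le_sum fun j (_ : j ∈ univ) => hitems j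
  have hin : ∑ i ∈ S, util A y i ≤ α * ∑ i ∈ S, ∑ j, y j i := by
    rw [mul_sum]
    exact sum_le_sum fun i hi => util_le_mul_sum (hAS · i hi) (hy · i)
  have hout : ∑ i ∈ Sᶜ, util A y i ≤ β * ∑ i ∈ Sᶜ, ∑ j, y j i := by
    rw [mul_sum]
    exact sum_le_sum fun i hi => util_le_mul_sum (hASc · i (mem_compl.1 hi)) (hy · i)
  rw [← sum_add_sum_compl S] at htotal ⊢
  nlinarith [mul_le_mul_of_nonneg_left hS (sub_nonneg.2 hβα)]

theorem Induced.sum_le_sum_centers {C : ℕ} {obj : Fin C → (Fin m → Fin n → ℝ) → ℝ}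
    {ctr : Fin n → Fin C} {xc : Fin C → Fin m → ℝ} {y : Fin m → Fin n → ℝ}
    (hy : Induced obj ctr xc y) (j : Fin m) : ∑ i, y j i ≤ ∑ c, xc c j := by
  rw [← sum_fiberwise univ ctr]
  exact sum_le_sum fun c _ => hy.2.1 c j

theorem Induced.sum_sum_le_center {C : ℕ} {obj : Fin C → (Fin m → Fin n → ℝ) → ℝ}
    {ctr : Fin n → Fin C} {xc : Fin C → Fin m → ℝ} {y : Fin m → Fin n → ℝ}
    (hy : Induced obj ctr xc y) (c : Fin C) : ∑ i ∈ Ic ctr c, ∑ j, y j i ≤ ∑ j, xc c j := by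
  rw [sum_comm]
  exact sum_le_sum fun j _ => hy.2.1 c j

theorem feasible_single (σ : Fin m → Fin n) : Feasible fun j => Pi.single (σ j) (1 : ℝ) :=
  ⟨fun j i => (Pi.single_nonneg.2 zero_le_one : (0 : Fin n → ℝ) ≤ Pi.single (σ j) 1) i,
    fun j => by simp⟩

theorem sum_util_single (σ : Fin m → Fin n) :
    ∑ i, util A (fun j => Pi.single (σ j) 1) i = ∑ j, A j (σ j) := by
  simp only [util]
  rw [sum_comm]
  simp [Pi.single_apply]

end Welfare

theorem Ic_nonempty_of_ctr_eq_div {m n L : ℕ} (hL : 0 < L) (hn : n = m * L)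
    {ctr : Fin n → Fin m} (hctr : ∀ i : Fin n, (ctr i : ℕ) = i / L) (c : Fin m) :
    (Ic ctr c).Nonempty :=
  ⟨⟨c * L, hn ▸ Nat.mul_lt_mul_of_pos_right c.isLt hL⟩,
    by simp [Ic, Fin.ext_iff, hctr, Nat.mul_div_cancel _ hL]⟩

theorem exists_feasible_sum_util_eq_of_blocks {k m n : ℕ} (hk : 0 < k) (hm : 0 < m)
    (hdvd : k ∣ m) (hn : n = m * (m / k)) {ctr : Fin n → Fin m}
    (hctr : ∀ i : Fin n, (ctr i : ℕ) = (i : ℕ) / (m / k)) {A : Matrix (Fin m) (Fin n) ℝ}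
    (hA1 : ∀ (j : Fin m) (i : Fin n), (ctr i : ℕ) = 0 →
      A j i = if ((i : ℕ) % (m / k)) * k ≤ (j : ℕ) ∧ (j : ℕ) < ((i : ℕ) % (m / k) + 1) * k
        then 1 / Real.sqrt k else 0) :
    ∃ y, Feasible y ∧ ∑ i, util A y i = m / Real.sqrt k := by
  have hjk : ∀ j : Fin m, (j : ℕ) / k < m / k := fun j => Nat.div_lt_div_of_lt_of_dvd hdvd j.isLt
  have hjn : ∀ j : Fin m, (j : ℕ) / k < n :=
    fun j => (hjk j).trans_le (hn ▸ Nat.le_mul_of_pos_left _ hm)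
  have hA : ∀ j : Fin m, A j ⟨j / k, hjn j⟩ = 1 / Real.sqrt k := by
    intro j
    rw [hA1 j _ (by simp [hctr, Nat.div_eq_of_lt (hjk j)]), if_pos]
    simp only [Nat.mod_eq_of_lt (hjk j)]
    exact ⟨Nat.div_mul_le_self j k, (Nat.div_lt_iff_lt_mul hk).1 (Nat.lt_succ_self _)⟩
  refine ⟨_, feasible_single fun j => ⟨j / k, hjn j⟩, ?_⟩
  simp [sum_util_single, hA, div_eq_mul_inv]

/-- **Theorem (utilitarian lower bound for Highest-Bidder-Wins auctions).** Fix a budget rule `g`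
and any Highest-Bidder-Wins auction `X` with budgets `g(ℓ, …, ℓ)`, where `ℓ = m/k`. Consider the
instance with `m` items and `C = m` centers, each representing `ℓ` individuals (individual `i`
belongs to center `⌊i/ℓ⌋`); the `i`-th individual of center `0` values the `i`-th block of `k`
items at `1/√k` each, and every individual of every other center values all items at `1/√m`
(a rank-`m/k`, `1`-incoherent matrix). As in the paper, take center `0` to be a center of
minimum budget. Then at every pure Nash equilibrium `b`, center `0` receives a total fraction of
items of at most `1`, and the induced allocation `ỹ` satisfies
`GMW₁(y*) ≥ (m/√k)/(√m + 1/√k − 1/√m) · GMW₁(ỹ)` for every optimal feasible `y*`. -/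
theorem hbw_utilitarian_poa_lower_bound {k m : ℕ} (hk : 0 < k) (hm : 0 < m) (hdvd : k ∣ m)
    (g : (Fin m → ℝ) → Fin m → ℝ)
    (X : (Fin m → Fin m → ℝ) → Fin m → Fin m → ℝ)
    (hX : IsHBW (g fun _ => ((m / k : ℕ) : ℝ)) X)
    (hmin : ∀ c : Fin m, g (fun _ => ((m / k : ℕ) : ℝ)) ⟨0, hm⟩ ≤ g (fun _ => ((m / k : ℕ) : ℝ)) c)
    {n : ℕ} (hn : n = m * (m / k))
    (ctr : Fin n → Fin m)
    (hctr : ∀ i : Fin n, (ctr i : ℕ) = (i : ℕ) / (m / k))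
    (A : Matrix (Fin m) (Fin n) ℝ)
    (hA1 : ∀ (j : Fin m) (i : Fin n), (ctr i : ℕ) = 0 →
      A j i = if ((i : ℕ) % (m / k)) * k ≤ (j : ℕ) ∧ (j : ℕ) < ((i : ℕ) % (m / k) + 1) * k
        then 1 / Real.sqrt k else 0)
    (hA2 : ∀ (j : Fin m) (i : Fin n), (ctr i : ℕ) ≠ 0 → A j i = 1 / Real.sqrt m)
    (b : Fin m → Fin m → ℝ)
    (heq : HBWEquilibrium X (fun c y => GMW1c A ctr c y) ctr b)
    (ytil : Fin m → Fin n → ℝ)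
    (hind : Induced (fun c y => GMW1c A ctr c y) ctr (fun c j => X b j c) ytil) :
    (∑ j, X b j ⟨0, hm⟩ ≤ 1) ∧
    ∀ ystar : Fin m → Fin n → ℝ, Feasible ystar →
      (∀ y : Fin m → Fin n → ℝ, Feasible y → GMW1 A y ≤ GMW1 A ystar) →
      ((m : ℝ) / Real.sqrt k) / (Real.sqrt m + 1 / Real.sqrt k - 1 / Real.sqrt m) *
          GMW1 A ytil ≤ GMW1 A ystar := by
  have hkm : k ≤ m := Nat.le_of_dvd hm hdvd
  have hsk : 0 < √(k : ℝ) := by positivity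
  have hαβ : 1 / √(m : ℝ) ≤ 1 / √k :=
    one_div_le_one_div_of_le hsk (Real.sqrt_le_sqrt (by exact_mod_cast hkm))
  have hsum : ∑ j, X b j ⟨0, hm⟩ ≤ 1 :=
    hX.sum_le_one_of_equilibrium le_rfl heq hmin fun c hc =>
      ⟨Ic_nonempty_of_ctr_eq_div (Nat.div_pos hkm hk) hn hctr c, 1 / √m, by positivity,
        fun j i hi => hA2 j i (by simp_all [Ic, Fin.ext_iff])⟩
  refine ⟨hsum, fun ystar _ hopt => ?_⟩
  have hub : ∑ i, util A ytil i ≤ √m + 1 / √k - 1 / √m := by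
    refine (sum_util_le_of_two_levels (Ic ctr ⟨0, hm⟩) (by positivity) hαβ (fun j i hi => ?_)
      (fun j i hi => (hA2 j i (by simp_all [Ic, Fin.ext_iff])).le) hind.1
      (fun j => (hind.sum_le_sum_centers j).trans (hX.sum_le_one b heq.1 j))
      ((hind.sum_sum_le_center _).trans hsum)).trans_eq ?_
    · rw [hA1 j i (by simp_all [Ic])]
      split_ifs
      exacts [le_rfl, by positivity]
    · rw [one_div_mul_eq_div, Real.div_sqrt, add_sub_assoc]
  obtain ⟨y₀, hy₀, hy₀util⟩ := exists_feasible_sum_util_eq_of_blocks hk hm hdvd hn hctr hA1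
  have hlb := hopt y₀ hy₀
  rw [GMW1, GMW1, hy₀util] at hlb
  have hD : 0 < √(m : ℝ) + 1 / √k - 1 / √m := by
    linarith [Real.sqrt_pos.2 (by positivity : (0 : ℝ) < m)]
  calc (m / √k) / (√m + 1 / √k - 1 / √m) * GMW1 A ytil
      ≤ (m / √k) / (√m + 1 / √k - 1 / √m) * (1 / n * (√m + 1 / √k - 1 / √m)) := by
        rw [GMW1]
        gcongr
    _ = 1 / n * (m / √k) := by rw [mul_left_comm, div_mul_cancel₀ _ hD.ne']
    _ ≤ GMW1 A ystar := hlb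
end

section
/- Let the n individuals be partitioned into centers I_1,…,I_C with an arbitrary nonnegative m×n valuation matrix A. Let b̃ be any pure Nash equilibrium of the Trading Post mechanism with proportional budgets in which each center's objective is the Nash social welfare of its own individuals, NSW_c(y) = (∏_{i∈I_c} u_{(c,i)}(y))^{1/|I_c|}, and let ỹ be the induced allocation. Then for every feasible allocation y*, NSW(y*) ≤ 2 · NSW(ỹ), where NSW(y) = (∏_{i=1}^n u_i(y))^{1/n}. That is, the Price of Anarchy of the Trading Post mechanism with respect to Nash social welfare is at most 2. -/
open scoped BigOperators

open scoped Classical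

/-- The Trading Post allocation induced by bids `b`: individual `i` receives the fraction
`b_{j,i} / Σ_{i'} b_{j,i'}` of item `j` (zero if there are no bids on `j`). -/
noncomputable def tpAlloc {m n : ℕ} (b : Fin m → Fin n → ℝ) : Fin m → Fin n → ℝ :=
  fun j i => if (∑ i', b j i') = 0 then 0 else b j i / ∑ i', b j i'

/-- Bids are valid for the Trading Post mechanism with proportional budgets: nonnegative, and
each center `c` spends at most its budget `|I_c|` in total. -/
def TPValid {m n C : ℕ} (ctr : Fin n → Fin C) (b : Fin m → Fin n → ℝ) : Prop :=
  (∀ j i, 0 ≤ b j i) ∧ ∀ c, ∑ j, ∑ i ∈ Ic ctr c, b j i ≤ ((Ic ctr c).card : ℝ)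

/-- `b` is a pure Nash equilibrium of the Trading Post mechanism with proportional budgets,
where center `c` evaluates allocations by `obj c`: no center can strictly improve its objective
by unilaterally switching to other budget-feasible bids for its own individuals. -/
def TPEquilibrium {m n C : ℕ} (ctr : Fin n → Fin C)
    (obj : Fin C → (Fin m → Fin n → ℝ) → ℝ) (b : Fin m → Fin n → ℝ) : Prop :=
  TPValid ctr b ∧
    ∀ (c : Fin C) (b' : Fin m → Fin n → ℝ), TPValid ctr b' →
      (∀ j i, ctr i ≠ c → b' j i = b j i) →
      obj c (tpAlloc b') ≤ obj c (tpAlloc b)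

/-- The Nash social welfare of all `n` individuals: `NSW(y) = (∏ᵢ uᵢ(y))^{1/n}`. -/
noncomputable def NSW {m n : ℕ} (A : Matrix (Fin m) (Fin n) ℝ)
    (y : Fin m → Fin n → ℝ) : ℝ :=
  (∏ i, util A y i) ^ (1 / (n : ℝ))

/-- Center `c`'s objective: the Nash social welfare of its own individuals,
`NSW_c(y) = (∏_{i∈I_c} uᵢ(y))^{1/|I_c|}`. -/
noncomputable def NSWc {m n C : ℕ} (A : Matrix (Fin m) (Fin n) ℝ)
    (ctr : Fin n → Fin C) (c : Fin C) (y : Fin m → Fin n → ℝ) : ℝ :=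
  (∏ i ∈ Ic ctr c, util A y i) ^ (1 / ((Ic ctr c).card : ℝ))


/-!
Let `p j` be the total equilibrium bid on item `j` plus some `δ > 0`, and `q_c` the price of
center `c`'s part of `y*` at these prices. Bidding `t * p j * y*_{j,i}` with `t = |I_c| / q_c`
exhausts the budget of `c` and, since the others bid less than `p j` on item `j`, secures the
fraction `t / (t + 1)` of `y*_{j,i}` (the `δ` makes this work also on items nobody bids on).
Hence at equilibrium `NSW_c(y*) ≤ (1 + q_c / |I_c|) NSW_c(ỹ)`. As `NSW` is the geometric mean
of the `NSW_c` with weights `|I_c| / n`, weighted AM-GM gives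
`NSW(y*) ≤ (1 + ∑_c q_c / n) NSW(ỹ)`, and `∑_c q_c ≤ ∑_j p j ≤ n + m δ` because the total bid
is at most the total budget `n`. Let `δ → 0`.
-/

open Finset Filter Topology

section Centers

variable {n C : ℕ} {ctr : Fin n → Fin C}

lemma mem_Ic {c : Fin C} {i : Fin n} : i ∈ Ic ctr c ↔ ctr i = c := by simp [Ic]

lemma Ic_nonempty (hsurj : ∀ c, ∃ i, ctr i = c) (c : Fin C) : (Ic ctr c).Nonempty :=
  let ⟨i, hi⟩ := hsurj c; ⟨i, mem_Ic.2 hi⟩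

@[to_additive]
lemma prod_prod_Ic {M : Type*} [CommMonoid M] (ctr : Fin n → Fin C) (f : Fin n → M) :
    ∏ c, ∏ i ∈ Ic ctr c, f i = ∏ i, f i :=
  prod_fiberwise univ ctr f

lemma sum_card_Ic (ctr : Fin n → Fin C) : ∑ c, (#(Ic ctr c) : ℝ) = n := by
  simpa using sum_sum_Ic ctr (fun _ => (1 : ℝ))

end Centers

section Allocations

variable {m n : ℕ}

lemma tpAlloc_nonneg {b : Fin m → Fin n → ℝ} (hb : ∀ j i, 0 ≤ b j i) (j : Fin m) (i : Fin n) :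
    0 ≤ tpAlloc b j i := by
  unfold tpAlloc
  split_ifs
  · exact le_rfl
  · exact div_nonneg (hb j i) (sum_nonneg fun i' _ => hb j i')

lemma div_le_tpAlloc {b : Fin m → Fin n → ℝ} {j : Fin m} (hb : ∀ i, 0 ≤ b j i) {S : ℝ}
    (hS : ∑ i, b j i ≤ S) (i : Fin n) : b j i / S ≤ tpAlloc b j i := by
  unfold tpAlloc
  split_ifs with h
  · rw [(sum_eq_zero_iff_of_nonneg fun i _ => hb i).1 h i (mem_univ i), zero_div]
  · exact div_le_div_of_nonneg_left (hb i) ((sum_nonneg fun i _ => hb i).lt_of_ne' h) hS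

lemma util_nonneg {A : Matrix (Fin m) (Fin n) ℝ} (hA : ∀ j i, 0 ≤ A j i)
    {y : Fin m → Fin n → ℝ} (hy : ∀ j i, 0 ≤ y j i) (i : Fin n) : 0 ≤ util A y i :=
  sum_nonneg fun j _ => mul_nonneg (hA j i) (hy j i)

lemma mul_util_le_util {A : Matrix (Fin m) (Fin n) ℝ} (hA : ∀ j i, 0 ≤ A j i)
    {y y' : Fin m → Fin n → ℝ} {r : ℝ} {i : Fin n} (h : ∀ j, r * y j i ≤ y' j i) :
    r * util A y i ≤ util A y' i := by
  rw [util, mul_sum]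
  exact sum_le_sum fun j _ => by
    simpa only [mul_left_comm r] using mul_le_mul_of_nonneg_left (h j) (hA j i)

end Allocations

lemma mul_rpow_inv_card_le {ι : Type*} {s : Finset ι} (hs : s.Nonempty) {f g : ι → ℝ} {r : ℝ}
    (hr : 0 ≤ r) (hf : ∀ i ∈ s, 0 ≤ f i) (hfg : ∀ i ∈ s, r * f i ≤ g i) :
    r * (∏ i ∈ s, f i) ^ (1 / (#s : ℝ)) ≤ (∏ i ∈ s, g i) ^ (1 / (#s : ℝ)) := by
  have hP : 0 ≤ ∏ i ∈ s, f i := prod_nonneg hf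
  calc r * (∏ i ∈ s, f i) ^ (1 / (#s : ℝ))
      = (r ^ #s * ∏ i ∈ s, f i) ^ (1 / (#s : ℝ)) := by
        rw [Real.mul_rpow (by positivity) hP, one_div,
          Real.pow_rpow_inv_natCast hr hs.card_pos.ne']
    _ = (∏ i ∈ s, r * f i) ^ (1 / (#s : ℝ)) := by rw [prod_mul_distrib, prod_const]
    _ ≤ (∏ i ∈ s, g i) ^ (1 / (#s : ℝ)) :=
        Real.rpow_le_rpow (prod_nonneg fun i hi => mul_nonneg hr (hf i hi))
          (prod_le_prod (fun i hi => mul_nonneg hr (hf i hi)) hfg) (by positivity)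

section Welfare

variable {m n C : ℕ} {A : Matrix (Fin m) (Fin n) ℝ} {ctr : Fin n → Fin C}

lemma NSW_nonneg {y : Fin m → Fin n → ℝ} (hy : ∀ i, 0 ≤ util A y i) : 0 ≤ NSW A y :=
  Real.rpow_nonneg (prod_nonneg fun i _ => hy i) _

lemma NSWc_nonneg {y : Fin m → Fin n → ℝ} (hy : ∀ i, 0 ≤ util A y i) (c : Fin C) :
    0 ≤ NSWc A ctr c y :=
  Real.rpow_nonneg (prod_nonneg fun i _ => hy i) _

lemma NSW_eq_prod_NSWc (hc : ∀ c, (Ic ctr c).Nonempty) {y : Fin m → Fin n → ℝ}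
    (hy : ∀ i, 0 ≤ util A y i) :
    NSW A y = ∏ c, NSWc A ctr c y ^ ((#(Ic ctr c) : ℝ) / n) := by
  have hP : ∀ c, 0 ≤ ∏ i ∈ Ic ctr c, util A y i := fun c => prod_nonneg fun i _ => hy i
  have hexp : ∀ c, NSWc A ctr c y ^ ((#(Ic ctr c) : ℝ) / n) =
      (∏ i ∈ Ic ctr c, util A y i) ^ (1 / (n : ℝ)) := fun c => by
    have hk : (#(Ic ctr c) : ℝ) ≠ 0 := by exact_mod_cast (hc c).card_pos.ne'
    rw [NSWc, ← Real.rpow_mul (hP c)]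
    field_simp
  simp_rw [hexp]
  rw [Real.finsetProd_rpow _ _ (fun c _ => hP c), prod_prod_Ic, NSW]

lemma NSW_le_of_NSWc_le (hn : 0 < n) (hc : ∀ c, (Ic ctr c).Nonempty)
    {y y' : Fin m → Fin n → ℝ} (hy : ∀ i, 0 ≤ util A y i) (hy' : ∀ i, 0 ≤ util A y' i)
    {x : Fin C → ℝ} (hx : ∀ c, 0 ≤ x c) (h : ∀ c, NSWc A ctr c y ≤ x c * NSWc A ctr c y') :
    NSW A y ≤ (∑ c, (#(Ic ctr c) : ℝ) / n * x c) * NSW A y' := by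
  have hw : ∑ c, (#(Ic ctr c) : ℝ) / n = 1 := by
    rw [← sum_div, sum_card_Ic, div_self (by positivity)]
  have hAMGM := Real.geom_mean_le_arith_mean_weighted univ
    (fun c => (#(Ic ctr c) : ℝ) / n) x (fun c _ => by positivity) hw fun c _ => hx c
  rw [NSW_eq_prod_NSWc hc hy, NSW_eq_prod_NSWc hc hy']
  calc ∏ c, NSWc A ctr c y ^ ((#(Ic ctr c) : ℝ) / n)
      ≤ ∏ c, (x c * NSWc A ctr c y') ^ ((#(Ic ctr c) : ℝ) / n) :=
        prod_le_prod (fun c _ => Real.rpow_nonneg (NSWc_nonneg hy c) _) fun c _ =>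
          Real.rpow_le_rpow (NSWc_nonneg hy c) (h c) (by positivity)
    _ = (∏ c, x c ^ ((#(Ic ctr c) : ℝ) / n)) *
          ∏ c, NSWc A ctr c y' ^ ((#(Ic ctr c) : ℝ) / n) := by
        rw [← prod_mul_distrib]
        exact prod_congr rfl fun c _ => Real.mul_rpow (hx c) (NSWc_nonneg hy' c)
    _ ≤ _ := mul_le_mul_of_nonneg_right hAMGM
        (prod_nonneg fun c _ => Real.rpow_nonneg (NSWc_nonneg hy' c) _)

end Welfare

section Deviation

variable {m n C : ℕ} {ctr : Fin n → Fin C} {c : Fin C}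

def cost (ctr : Fin n → Fin C) (c : Fin C) (p : Fin m → ℝ) (y : Fin m → Fin n → ℝ) : ℝ :=
  ∑ j, p j * ∑ i ∈ Ic ctr c, y j i

def devBids (ctr : Fin n → Fin C) (c : Fin C) (b : Fin m → Fin n → ℝ) (p : Fin m → ℝ) (t : ℝ)
    (y : Fin m → Fin n → ℝ) : Fin m → Fin n → ℝ :=
  fun j i => if ctr i = c then t * p j * y j i else b j i

lemma cost_nonneg {p : Fin m → ℝ} (hp : ∀ j, 0 ≤ p j) {y : Fin m → Fin n → ℝ}
    (hy : Feasible y) : 0 ≤ cost ctr c p y :=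
  sum_nonneg fun j _ => mul_nonneg (hp j) (sum_nonneg fun i _ => hy.1 j i)

lemma sum_cost_le {p : Fin m → ℝ} (hp : ∀ j, 0 ≤ p j) {y : Fin m → Fin n → ℝ}
    (hy : Feasible y) : ∑ c, cost ctr c p y ≤ ∑ j, p j := by
  calc ∑ c, cost ctr c p y = ∑ j, p j * ∑ i, y j i := by
        simp only [cost, sum_comm (γ := Fin C), ← mul_sum, sum_sum_Ic]
    _ ≤ ∑ j, p j := sum_le_sum fun j _ => mul_le_of_le_one_right (hp j) (hy.2 j)

lemma sum_bids_le {b : Fin m → Fin n → ℝ} (hb : TPValid ctr b) : ∑ j, ∑ i, b j i ≤ n := by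
  calc ∑ j, ∑ i, b j i = ∑ c, ∑ j, ∑ i ∈ Ic ctr c, b j i := by
        simp only [sum_sum_Ic, sum_comm (γ := Fin C)]
    _ ≤ ∑ c, (#(Ic ctr c) : ℝ) := sum_le_sum fun c _ => hb.2 c
    _ = n := sum_card_Ic ctr

lemma pos_of_sum_lt {b : Fin m → Fin n → ℝ} (hb : ∀ j i, 0 ≤ b j i) {p : Fin m → ℝ}
    (hp : ∀ j, ∑ i, b j i < p j) (j : Fin m) : 0 < p j :=
  (sum_nonneg fun i _ => hb j i).trans_lt (hp j)

lemma devBids_of_ne {b : Fin m → Fin n → ℝ} {p : Fin m → ℝ} {t : ℝ} {y : Fin m → Fin n → ℝ}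
    {j : Fin m} {i : Fin n} (h : ctr i ≠ c) : devBids ctr c b p t y j i = b j i :=
  if_neg h

lemma devBids_nonneg {b : Fin m → Fin n → ℝ} (hb : ∀ j i, 0 ≤ b j i) {p : Fin m → ℝ}
    (hp : ∀ j, 0 ≤ p j) {y : Fin m → Fin n → ℝ} (hy : Feasible y) {t : ℝ} (ht : 0 ≤ t)
    (j : Fin m) (i : Fin n) : 0 ≤ devBids ctr c b p t y j i := by
  unfold devBids
  split_ifs
  · exact mul_nonneg (mul_nonneg ht (hp j)) (hy.1 j i)
  · exact hb j i

lemma TPValid_devBids {b : Fin m → Fin n → ℝ} (hb : TPValid ctr b) {p : Fin m → ℝ}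
    (hp : ∀ j, 0 ≤ p j) {y : Fin m → Fin n → ℝ} (hy : Feasible y) {t : ℝ} (ht : 0 ≤ t)
    (hbudget : t * cost ctr c p y ≤ #(Ic ctr c)) : TPValid ctr (devBids ctr c b p t y) := by
  refine ⟨devBids_nonneg hb.1 hp hy ht, fun c' => ?_⟩
  rcases eq_or_ne c' c with rfl | hc'
  · calc ∑ j, ∑ i ∈ Ic ctr c', devBids ctr c' b p t y j i = t * cost ctr c' p y := by
          simp only [cost, mul_sum]
          refine sum_congr rfl fun j _ => sum_congr rfl fun i hi => ?_
          rw [devBids, if_pos (mem_Ic.1 hi), mul_assoc]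
      _ ≤ _ := hbudget
  · calc ∑ j, ∑ i ∈ Ic ctr c', devBids ctr c b p t y j i = ∑ j, ∑ i ∈ Ic ctr c', b j i :=
          sum_congr rfl fun j _ => sum_congr rfl fun i hi =>
            devBids_of_ne ((mem_Ic.1 hi).trans_ne hc')
      _ ≤ _ := hb.2 c'

lemma mul_le_tpAlloc_devBids {b : Fin m → Fin n → ℝ} (hb : ∀ j i, 0 ≤ b j i)
    {p : Fin m → ℝ} (hp : ∀ j, ∑ i, b j i < p j) {y : Fin m → Fin n → ℝ} (hy : Feasible y)
    {t : ℝ} (ht : 0 ≤ t) (j : Fin m) {i : Fin n} (hi : ctr i = c) :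
    t / (t + 1) * y j i ≤ tpAlloc (devBids ctr c b p t y) j i := by
  have hpj : 0 < p j := pos_of_sum_lt hb hp j
  have hdev := devBids_nonneg (ctr := ctr) (c := c) hb (fun j => (pos_of_sum_lt hb hp j).le)
    hy ht j
  set d := devBids ctr c b p t y
  have hsum : ∑ i', d j i' ≤ (t + 1) * p j := by
    rw [← sum_add_sum_compl (Ic ctr c)]
    calc ∑ i' ∈ Ic ctr c, d j i' + ∑ i' ∈ (Ic ctr c)ᶜ, d j i'
        = t * p j * ∑ i' ∈ Ic ctr c, y j i' + ∑ i' ∈ (Ic ctr c)ᶜ, b j i' := by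
          rw [mul_sum]
          congr 1
          · exact sum_congr rfl fun i' hi' => if_pos (mem_Ic.1 hi')
          · exact sum_congr rfl fun i' hi' => devBids_of_ne (mt mem_Ic.2 (mem_compl.1 hi'))
      _ ≤ t * p j * 1 + p j := by
          gcongr
          · exact (sum_le_univ_sum_of_nonneg fun i' => hy.1 j i').trans (hy.2 j)
          · exact (sum_le_univ_sum_of_nonneg fun i' => hb j i').trans (hp j).le
      _ = (t + 1) * p j := by ring
  calc t / (t + 1) * y j i = d j i / ((t + 1) * p j) := by
        have := hpj.ne'
        simp only [d, devBids, if_pos hi]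
        field_simp
    _ ≤ _ := div_le_tpAlloc hdev hsum i

variable {A : Matrix (Fin m) (Fin n) ℝ}

lemma NSWc_eq_zero_of_cost_eq_zero {p : Fin m → ℝ} (hp : ∀ j, 0 < p j)
    {y : Fin m → Fin n → ℝ} (hy : Feasible y) (hc : (Ic ctr c).Nonempty)
    (hq : cost ctr c p y = 0) : NSWc A ctr c y = 0 := by
  obtain ⟨i, hi⟩ := hc
  have hyi : ∀ j, y j i = 0 := fun j => by
    have hterm := (sum_eq_zero_iff_of_nonneg fun j _ =>
      mul_nonneg (hp j).le (sum_nonneg fun i _ => hy.1 j i)).1 hq j (mem_univ j)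
    have hσ := (mul_eq_zero.1 hterm).resolve_left (hp j).ne'
    exact (sum_eq_zero_iff_of_nonneg fun i _ => hy.1 j i).1 hσ i hi
  have hu : util A y i = 0 := by simp [util, hyi]
  rw [NSWc, prod_eq_zero hi hu,
    Real.zero_rpow (one_div_ne_zero (Nat.cast_ne_zero.2 (card_ne_zero_of_mem hi)))]

lemma NSWc_le_of_TPEquilibrium (hA : ∀ j i, 0 ≤ A j i) {b : Fin m → Fin n → ℝ}
    (heq : TPEquilibrium ctr (fun c y => NSWc A ctr c y) b) {p : Fin m → ℝ}
    (hp : ∀ j, ∑ i, b j i < p j) {y : Fin m → Fin n → ℝ} (hy : Feasible y)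
    (hc : (Ic ctr c).Nonempty) :
    NSWc A ctr c y ≤ (1 + cost ctr c p y / #(Ic ctr c)) * NSWc A ctr c (tpAlloc b) := by
  have hp0 := pos_of_sum_lt heq.1.1 hp
  have hk : (0 : ℝ) < #(Ic ctr c) := by exact_mod_cast hc.card_pos
  set q := cost ctr c p y
  rcases (cost_nonneg (fun j => (hp0 j).le) hy).eq_or_lt with hq | hq
  · rw [NSWc_eq_zero_of_cost_eq_zero hp0 hy hc hq.symm]
    have := NSWc_nonneg (ctr := ctr) (util_nonneg hA (tpAlloc_nonneg heq.1.1)) c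
    positivity
  set t := (#(Ic ctr c) : ℝ) / q
  have ht : 0 ≤ t := by positivity
  have hvalid : TPValid ctr (devBids ctr c b p t y) :=
    TPValid_devBids heq.1 (fun j => (hp0 j).le) hy ht (div_mul_cancel₀ _ hq.ne').le
  have hdev : t / (t + 1) * NSWc A ctr c y ≤ NSWc A ctr c (tpAlloc (devBids ctr c b p t y)) :=
    mul_rpow_inv_card_le hc (by positivity) (fun i _ => util_nonneg hA hy.1 i) fun i hi =>
      mul_util_le_util hA fun j => mul_le_tpAlloc_devBids heq.1.1 hp hy ht j (mem_Ic.1 hi)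
  have hratio : (1 + q / #(Ic ctr c)) * (t / (t + 1)) = 1 := by
    have hq0 : q ≠ 0 := hq.ne'
    have hkq : (#(Ic ctr c) : ℝ) + q ≠ 0 := (add_pos hk hq).ne'
    simp only [t]
    field_simp
  calc NSWc A ctr c y = (1 + q / #(Ic ctr c)) * (t / (t + 1) * NSWc A ctr c y) := by
        rw [← mul_assoc, hratio, one_mul]
    _ ≤ (1 + q / #(Ic ctr c)) * NSWc A ctr c (tpAlloc b) := by
        gcongr
        exact hdev.trans (heq.2 c _ hvalid fun j i => devBids_of_ne)

end Deviation

lemma NSW_le_of_TPEquilibrium {m n C : ℕ} (hn : 0 < n) {A : Matrix (Fin m) (Fin n) ℝ}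
    (hA : ∀ j i, 0 ≤ A j i) {ctr : Fin n → Fin C} (hc : ∀ c, (Ic ctr c).Nonempty)
    {b : Fin m → Fin n → ℝ} (heq : TPEquilibrium ctr (fun c y => NSWc A ctr c y) b)
    {p : Fin m → ℝ} (hp : ∀ j, ∑ i, b j i < p j) {y : Fin m → Fin n → ℝ} (hy : Feasible y) :
    NSW A y ≤ (1 + (∑ j, p j) / n) * NSW A (tpAlloc b) := by
  have hp0 j : 0 ≤ p j := (pos_of_sum_lt heq.1.1 hp j).le
  have hu : ∀ i, 0 ≤ util A (tpAlloc b) i := util_nonneg hA (tpAlloc_nonneg heq.1.1)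
  have hk : ∀ c, (#(Ic ctr c) : ℝ) ≠ 0 := fun c => by exact_mod_cast (hc c).card_pos.ne'
  have hmean : ∑ c, (#(Ic ctr c) : ℝ) / n * (1 + cost ctr c p y / #(Ic ctr c)) =
      1 + (∑ c, cost ctr c p y) / n := by
    have hn' : (n : ℝ) ≠ 0 := by positivity
    calc ∑ c, (#(Ic ctr c) : ℝ) / n * (1 + cost ctr c p y / #(Ic ctr c))
        = (∑ c, (#(Ic ctr c) : ℝ) + ∑ c, cost ctr c p y) / n := by
          rw [← sum_add_distrib, sum_div]
          exact sum_congr rfl fun c _ => by field_simp [hk c]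
      _ = 1 + (∑ c, cost ctr c p y) / n := by rw [sum_card_Ic, add_div, div_self hn']
  calc NSW A y ≤ (∑ c, (#(Ic ctr c) : ℝ) / n * (1 + cost ctr c p y / #(Ic ctr c))) *
        NSW A (tpAlloc b) :=
      NSW_le_of_NSWc_le hn hc (util_nonneg hA hy.1) hu
        (fun c => by have := cost_nonneg (ctr := ctr) (c := c) hp0 hy; positivity)
        fun c => NSWc_le_of_TPEquilibrium hA heq hp hy (hc c)
    _ ≤ (1 + (∑ j, p j) / n) * NSW A (tpAlloc b) := by
      rw [hmean]
      gcongr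
      · exact NSW_nonneg hu
      · exact sum_cost_le hp0 hy

theorem tradingPost_nsw_poa_le_two_general {m n C : ℕ} (hn : 0 < n)
    (A : Matrix (Fin m) (Fin n) ℝ) (hA0 : ∀ j i, 0 ≤ A j i)
    (ctr : Fin n → Fin C) (hsurj : ∀ c, ∃ i, ctr i = c)
    (b : Fin m → Fin n → ℝ)
    (heq : TPEquilibrium ctr (fun c y => NSWc A ctr c y) b) :
    ∀ ystar : Fin m → Fin n → ℝ, Feasible ystar →
      NSW A ystar ≤ 2 * NSW A (tpAlloc b) := by
  intro ystar hy
  set N := NSW A (tpAlloc b)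
  have hN : 0 ≤ N := NSW_nonneg (util_nonneg hA0 (tpAlloc_nonneg heq.1.1))
  have hδ : ∀ δ > 0, NSW A ystar ≤ (2 + m * δ / n) * N := fun δ hδ => by
    refine (NSW_le_of_TPEquilibrium hn hA0 (Ic_nonempty hsurj) heq
      (p := fun j => ∑ i, b j i + δ) (fun j => lt_add_of_pos_right _ hδ) hy).trans ?_
    refine mul_le_mul_of_nonneg_right ?_ hN
    have hB : (∑ j, ∑ i, b j i) / n ≤ 1 := (div_le_one (by positivity)).2 (sum_bids_le heq.1)
    rw [sum_add_distrib, sum_const, card_univ, Fintype.card_fin, nsmul_eq_mul, add_div]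
    linarith
  have hlim : Tendsto (fun δ => (2 + m * δ / n) * N) (𝓝[>] 0) (𝓝 (2 * N)) := by
    have : Continuous fun δ : ℝ => (2 + m * δ / n) * N := by fun_prop
    simpa using (this.continuousWithinAt (s := Set.Ioi 0) (x := 0)).tendsto
  exact ge_of_tendsto hlim (eventually_nhdsWithin_of_forall hδ)

/-- **Theorem (Nash social welfare PoA of Trading Post).** For any nonnegative valuation matrix,
at every pure Nash equilibrium `b` of the Trading Post mechanism with proportional budgets (each
center maximizing the Nash social welfare of its own individuals), the induced allocation
`ỹ = tpAlloc b` satisfies `NSW(y*) ≤ 2 · NSW(ỹ)` for every feasible allocation `y*`. -/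
theorem tradingPost_nsw_poa_le_two {m n C : ℕ} (hm : 0 < m) (hn : 0 < n) (hC : 0 < C)
    (A : Matrix (Fin m) (Fin n) ℝ) (hA0 : ∀ j i, 0 ≤ A j i)
    (ctr : Fin n → Fin C) (hsurj : ∀ c, ∃ i, ctr i = c)
    (b : Fin m → Fin n → ℝ)
    (heq : TPEquilibrium ctr (fun c y => NSWc A ctr c y) b) :
    ∀ ystar : Fin m → Fin n → ℝ, Feasible ystar →
      NSW A ystar ≤ 2 * NSW A (tpAlloc b) :=
  tradingPost_nsw_poa_le_two_general hn A hA0 ctr hsurj b heq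
end

section
/- Fix a center c with |I_c| = s individuals out of n total, and let q ∈ ℝ^m with q_j ≥ 0 denote, for each item j, the total bid of all other centers on item j in the Trading Post mechanism; assume Σ_{j∈[m]} q_j ≤ n − s (which holds when the other centers' bids are budget-feasible with proportional budgets). Set β = (Σ_{j∈[m]} q_j + s)/n, so that β ≤ 1 and in general β ≤ 1 + s/n whenever Σ_j q_j ≤ n. If q_j > 0 for all j, then β > s/n, the bids b'_{j,(c,i)} = q_j/(nβ − s) for each i ∈ I_c and item j are nonnegative and satisfy Σ_{j∈[m]} Σ_{i∈I_c} b'_{j,(c,i)} = s (so they are budget-feasible), and against the other centers' bids the Trading Post allocation gives each individual i ∈ I_c exactly the fraction b'_{j,(c,i)}/(q_j + Σ_{i'∈I_c} b'_{j,(c,i')}) = 1/(nβ) of every item j; consequently each individual i ∈ I_c obtains utility u_i = (1/β) · u_i(y^equal), where y^equal_{j,i} = 1/n for all j, i. -/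
open scoped BigOperators

/-- **Equal-split deviation in the Trading Post mechanism.** A center `c` with `s` individuals
out of `n`, facing other centers' total item bids `q_j ≥ 0` with `Σ_j q_j ≤ n − s`, sets
`β = (Σ_j q_j + s)/n`. Then `β ≤ 1` (and `β ≤ 1 + s/n`), and if moreover `q_j > 0` for all `j`:
`β > s/n`; the bids `b'_{j,(c,i)} = q_j/(nβ − s)` (identical for the `s` individuals) are
nonnegative and exhaust exactly the budget `s`; against the others' bids each of center `c`'s
individuals receives exactly the fraction `b'_j/(q_j + s·b'_j) = 1/(nβ)` of every item; and
consequently each such individual with valuation vector `v` obtains utility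
`(1/β)` times its utility under the equal-split allocation `y^equal_{j,i} = 1/n`. -/
theorem tradingPost_equal_split_deviation {m n s : ℕ}
    (hm : 0 < m) (hn : 0 < n) (hs : 0 < s) (hsn : s ≤ n)
    (q : Fin m → ℝ) (hq0 : ∀ j, 0 ≤ q j)
    (hqsum : ∑ j, q j ≤ (n : ℝ) - s)
    (β : ℝ) (hβ : β = ((∑ j, q j) + s) / n) :
    β ≤ 1 ∧ β ≤ 1 + (s : ℝ) / n ∧
    ((∀ j, 0 < q j) →
      (s : ℝ) / n < β ∧
      (∀ j, 0 ≤ q j / ((n : ℝ) * β - s)) ∧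
      (∑ j, ∑ _i : Fin s, q j / ((n : ℝ) * β - s)) = (s : ℝ) ∧
      (∀ j, (q j / ((n : ℝ) * β - s)) /
          (q j + (s : ℝ) * (q j / ((n : ℝ) * β - s))) = 1 / ((n : ℝ) * β)) ∧
      ∀ v : Fin m → ℝ,
        ∑ j, v j * ((q j / ((n : ℝ) * β - s)) /
            (q j + (s : ℝ) * (q j / ((n : ℝ) * β - s)))) =
          (1 / β) * ∑ j, v j * (1 / (n : ℝ))) := by
  have hn' : (0:ℝ) < n := by exact_mod_cast hn
  have hs' : (0:ℝ) < s := by exact_mod_cast hs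
  have hnβ : (n : ℝ) * β = (∑ j, q j) + s := by
    rw [hβ]; field_simp
  have hkey : (n : ℝ) * β - s = ∑ j, q j := by linarith
  refine ⟨?_, ?_, ?_⟩
  · rw [hβ, div_le_one hn']; linarith
  · rw [hβ]
    rw [div_le_iff₀ hn']
    have : (1 + (s:ℝ)/n) * n = n + s := by field_simp
    rw [this]
    linarith
  · intro hqpos
    have hQ : 0 < ∑ j, q j := by
      have := Finset.sum_pos (fun j _ => hqpos j) ⟨⟨0, hm⟩, Finset.mem_univ _⟩
      exact this
    have hQne : (∑ j, q j) ≠ 0 := hQ.ne'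
    refine ⟨?_, ?_, ?_, ?_, ?_⟩
    · rw [hβ, div_lt_div_iff₀ hn' hn']
      nlinarith
    · intro j
      exact div_nonneg (hq0 j) (by rw [hkey]; exact hQ.le)
    · rw [hkey]
      simp only [Finset.sum_const, Finset.card_univ, Fintype.card_fin, nsmul_eq_mul]
      rw [← Finset.mul_sum, ← Finset.sum_div, div_self hQne, mul_one]
    · intro j
      rw [hkey]
      have hqj := hqpos j
      rw [hnβ]
      field_simp
    · intro v
      have hβpos : 0 < β := by
        rw [hβ]; positivity
      have heach : ∀ j, (q j / ((n : ℝ) * β - s)) /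
          (q j + (s : ℝ) * (q j / ((n : ℝ) * β - s))) = 1 / ((n : ℝ) * β) := by
        intro j
        rw [hkey]
        have hqj := hqpos j
        rw [hnβ]
        field_simp
      rw [Finset.mul_sum]
      refine Finset.sum_congr rfl fun j _ => ?_
      rw [heach j, one_div, mul_inv, one_div, one_div]
      ring
end

section
/- Let k, m, n be positive integers with k dividing m and n > m/k, and let A be the m×n matrix defined by: for columns 1 ≤ i ≤ m/k, A_{j,i} = 1/√k if (i−1)k < j ≤ i·k and 0 otherwise; for columns m/k < i ≤ n, A_{j,i} = 1/√m for all j. Set w = n − m/k. Then the eigenvalues of the n×n matrix AᵀA are: w + 1 with multiplicity 1, the eigenvalue 1 with multiplicity m/k − 1, and 0 with multiplicity n − m/k. -/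
/-!
With `r = m / k`, the matrix factors as `A = U * B`, where `U` (`m × r`) has orthonormal columns,
the normalized indicators of the row blocks, and `B = [1 | (1/√r) J]` (`r × n`). Hence
`AᵀA = BᵀB`, whose characteristic polynomial is `X ^ (n - r)` times that of
`B Bᵀ = 1 + ((n - r) / r) J`, a rank-one perturbation of the identity with eigenvalue
`n - r + 1` on the constant vector and `1` on its orthogonal complement.
-/

open scoped BigOperators
open Polynomial Matrix

namespace Matrix

theorem charpoly_scalar_add_vecMulVec {n R : Type*} [Fintype n] [DecidableEq n] [Nonempty n]
    [CommRing R] (μ : R) (u v : n → R) :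
    (scalar n μ + vecMulVec u v).charpoly =
      (X - C (μ + u ⬝ᵥ v)) * (X - C μ) ^ (Fintype.card n - 1) := by
  obtain ⟨N, hN⟩ : ∃ N, Fintype.card n = N + 1 :=
    Nat.exists_eq_succ_of_ne_zero Fintype.card_ne_zero
  have h : scalar n μ + vecMulVec u v = vecMulVec u v - scalar n (-μ) := by
    rw [map_neg, sub_neg_eq_add, add_comm]
  rw [h, charpoly_sub_scalar, charpoly_vecMulVec, hN, Nat.add_sub_cancel]
  simp only [sub_comp, pow_succ, mul_comp, pow_comp, X_comp, C_neg, smul_eq_C_mul, C_add, C_comp]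
  ring

variable {R : Type*} [CommRing R]

def augmentedIdentity (r n : ℕ) (c : R) : Matrix (Fin r) (Fin n) R :=
  of fun a i => if (i : ℕ) < r then (if (a : ℕ) = i then 1 else 0) else c

theorem augmentedIdentity_mul_transpose {r n : ℕ} (h : r ≤ n) (c : R) :
    augmentedIdentity r n c * (augmentedIdentity r n c)ᵀ =
      scalar (Fin r) 1 + vecMulVec (fun _ => c) (fun _ => ((n - r : ℕ) : R) * c) := by
  ext a b
  let g : ℕ → R := fun i =>
    if i < r then (if (a : ℕ) = i then (if a = b then 1 else 0) else 0) else c * c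
  have hg : ∀ i : Fin n, augmentedIdentity r n c a i * augmentedIdentity r n c b i = g i := by
    intro i
    simp only [augmentedIdentity, of_apply, g, Fin.ext_iff]
    split_ifs <;> first | (exfalso; omega) | simp
  simp only [mul_apply, transpose_apply, hg]
  rw [Fin.sum_univ_eq_sum_range g, ← Finset.sum_range_add_sum_Ico _ h,
    Finset.sum_congr rfl (fun i hi => if_pos (Finset.mem_range.1 hi)),
    Finset.sum_congr rfl (fun i hi => if_neg (Finset.mem_Ico.1 hi).1.not_gt), Finset.sum_ite_eq,
    if_pos (Finset.mem_range.2 a.2), Finset.sum_const, Nat.card_Ico, nsmul_eq_mul]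
  simp [one_apply, vecMulVec_apply]
  ring

def blockIndicator (m r k : ℕ) (c : R) : Matrix (Fin m) (Fin r) R :=
  of fun j a => if (j : ℕ) / k = a then c else 0

theorem blockIndicator_transpose_mul_self {m r k : ℕ} (hk : 0 < k) (h : r * k ≤ m) (c : R) :
    (blockIndicator m r k c)ᵀ * blockIndicator m r k c = scalar (Fin r) (k * (c * c)) := by
  ext a b
  have hblock : (Finset.range m).filter (· / k = a) = Finset.Ico (a * k) (a * k + k) := by
    ext j
    simp only [Finset.mem_filter, Finset.mem_range, Finset.mem_Ico, Nat.div_eq_iff hk]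
    constructor
    · omega
    · intro hj
      refine ⟨lt_of_lt_of_le hj.2 ?_, hj.1, by omega⟩
      nlinarith [a.2]
  have hterm : ∀ j : Fin m, blockIndicator m r k c j a * blockIndicator m r k c j b =
      if (j : ℕ) / k = a then (if a = b then c * c else 0) else 0 := by
    intro j
    simp only [blockIndicator, of_apply, Fin.ext_iff]
    split_ifs <;> first | (exfalso; omega) | simp
  simp only [mul_apply, transpose_apply, hterm]
  rw [Fin.sum_univ_eq_sum_range (fun j => if j / k = a then (if a = b then c * c else 0) else 0),
    ← Finset.sum_filter, hblock, Finset.sum_const, Nat.card_Ico, Nat.add_sub_cancel_left,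
    nsmul_eq_mul]
  simp [scalar_apply, diagonal_apply]

theorem blockIndicator_mul_augmentedIdentity {m r k n : ℕ} (h : m ≤ r * k) (c d : R) :
    blockIndicator m r k c * augmentedIdentity r n d =
      of fun (j : Fin m) (i : Fin n) =>
        if (i : ℕ) < r then (if (j : ℕ) / k = i then c else 0) else c * d := by
  ext j i
  rw [mul_apply, of_apply]
  by_cases hi : (i : ℕ) < r
  · rw [if_pos hi, Fintype.sum_eq_single ⟨i, hi⟩]
    · simp [blockIndicator, augmentedIdentity, hi]
    · intro a ha
      simp [augmentedIdentity, hi, Fin.ext_iff.not.mp ha]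
  · have hj : (j : ℕ) / k < r := Nat.div_lt_of_lt_mul (by linarith [j.2, mul_comm r k])
    rw [if_neg hi, Fintype.sum_eq_single ⟨_, hj⟩]
    · simp [blockIndicator, augmentedIdentity, hi]
    · intro a ha
      have : (j : ℕ) / k ≠ a := fun h' => ha (Fin.ext h'.symm)
      simp [blockIndicator, this]

theorem charpoly_augmentedIdentity_mul_transpose {r n : ℕ} (hr : 0 < r) (hrn : r ≤ n) :
    (augmentedIdentity r n (1 / √r) * (augmentedIdentity r n (1 / √r))ᵀ).charpoly =
      (X - C (((n - r : ℕ) : ℝ) + 1)) * (X - 1) ^ (r - 1) := by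
  have : Nonempty (Fin r) := ⟨⟨0, hr⟩⟩
  have hr' : (0 : ℝ) < r := by exact_mod_cast hr
  have hdot : (fun _ : Fin r => 1 / √r) ⬝ᵥ (fun _ => ((n - r : ℕ) : ℝ) * (1 / √r)) =
      (n - r : ℕ) := by
    simp only [dotProduct, Finset.sum_const, Finset.card_univ, Fintype.card_fin, nsmul_eq_mul]
    field_simp
    rw [Real.sq_sqrt hr'.le]
  rw [augmentedIdentity_mul_transpose hrn, charpoly_scalar_add_vecMulVec, hdot,
    Fintype.card_fin, add_comm, C_1]

end Matrix

/-- **Spectrum of the Gram matrix of the block valuation matrix.** For the `m × n` matrix `A`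
whose first `m/k` columns are scaled block indicators (`1/√k` on rows `i·k ≤ j < (i+1)·k`) and
whose remaining `w = n − m/k` columns are the uniform vector `1/√m`, the eigenvalues of `AᵀA`
are `w + 1` (multiplicity `1`), `1` (multiplicity `m/k − 1`) and `0` (multiplicity `n − m/k`);
equivalently, the characteristic polynomial of `AᵀA` factors as
`(X − (w+1)) · (X − 1)^{m/k − 1} · X^{n − m/k}`. -/
theorem gram_charpoly_block_matrix {k m n : ℕ}
    (hk : 0 < k) (hm : 0 < m) (hdvd : k ∣ m) (hn : m / k < n)
    (A : Matrix (Fin m) (Fin n) ℝ)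
    (hA1 : ∀ (j : Fin m) (i : Fin n), (i : ℕ) < m / k →
      A j i =
        if (i : ℕ) * k ≤ (j : ℕ) ∧ (j : ℕ) < ((i : ℕ) + 1) * k then 1 / Real.sqrt k else 0)
    (hA2 : ∀ (j : Fin m) (i : Fin n), m / k ≤ (i : ℕ) → A j i = 1 / Real.sqrt m) :
    (Aᵀ * A).charpoly =
      (X - C (((n - m / k : ℕ) : ℝ) + 1)) * (X - 1) ^ (m / k - 1) * X ^ (n - m / k) := by
  set r := m / k
  have hmr : m = r * k := (Nat.div_mul_cancel hdvd).symm
  have hr : 0 < r := Nat.div_pos (Nat.le_of_dvd hm hdvd) hk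
  set U := blockIndicator m r k (1 / √k)
  set B := augmentedIdentity r n (1 / √r)
  have hU : Uᵀ * U = 1 := by
    have hk' : (0 : ℝ) < k := by exact_mod_cast hk
    rw [blockIndicator_transpose_mul_self hk hmr.ge, ← map_one (scalar (Fin r))]
    congr 1
    field_simp
    exact (Real.sq_sqrt hk'.le).symm
  have hA : A = U * B := by
    rw [blockIndicator_mul_augmentedIdentity hmr.le]
    ext j i
    rw [of_apply]
    by_cases hi : (i : ℕ) < r
    · rw [hA1 j i hi, if_pos hi]
      refine if_congr ?_ rfl rfl
      rw [← Nat.le_div_iff_mul_le hk, ← Nat.div_lt_iff_lt_mul hk]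
      omega
    · rw [hA2 j i (not_lt.mp hi), if_neg hi, hmr, Nat.cast_mul,
        Real.sqrt_mul (Nat.cast_nonneg _)]
      ring
  calc (Aᵀ * A).charpoly = (Bᵀ * B).charpoly := by
        rw [hA, transpose_mul, Matrix.mul_assoc, ← Matrix.mul_assoc Uᵀ, hU, Matrix.one_mul]
    _ = X ^ (n - r) * (B * Bᵀ).charpoly := by
        simpa using charpoly_mul_comm_of_le Bᵀ B (by simpa using hn.le)
    _ = _ := by
        rw [charpoly_augmentedIdentity_mul_transpose hr hn.le]
        ring
end

section
/- Let k, m, n be positive integers with k dividing m, k < m, and n ≥ 2, and let A be the m×n matrix with first column A_{j,1} = 1/√k for j ≤ k and 0 for j > k, and A_{j,i} = 1/√m for all 2 ≤ i ≤ n and all j ∈ [m]. Then AᵀA has exactly two nonzero eigenvalues, namely λ_{1,2} = (n ± √(n² − 4(n−1)(1 − k/m)))/2, each with multiplicity 1; moreover these satisfy ((λ₁ − 1)(λ₂ − 1))²(m − k)² = k²(λ₁λ₂)². -/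
/-!
`A = Vᵀ W` factors through `ℝ²`: the rows of `V` are the unit vectors `a = 𝟙_{[1,k]}/√k` and
`u = 𝟙/√m`, the rows of `W` are `e₁` and `𝟙 - e₁`. Hence `AᵀA = Wᵀ (V Vᵀ W)` has the nonzero
spectrum of the `2 × 2` matrix `(V Vᵀ)(W Wᵀ) = [[1, c], [c, 1]] · diag(1, n - 1)`, where
`c = ⟨a, u⟩ = √(k/m)`; its characteristic polynomial is `X² - nX + (n - 1)(1 - k/m)`, whose roots
are `λ₁, λ₂`. Everything else follows from `λ₁ + λ₂ = n` and `λ₁ λ₂ = (n - 1)(1 - k/m)`.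
-/

open Polynomial Matrix

theorem charpoly_transpose_mul_self_eq_X_pow_mul {R m n ι : Type*} [CommRing R] [Fintype m]
    [Fintype n] [Fintype ι] [DecidableEq n] [DecidableEq ι]
    {A : Matrix m n R} {V : Matrix ι m R} {W : Matrix ι n R} (hA : A = Vᵀ * W)
    (hι : Fintype.card ι ≤ Fintype.card n) :
    (Aᵀ * A).charpoly = X ^ (Fintype.card n - Fintype.card ι) * (V * Vᵀ * (W * Wᵀ)).charpoly := by
  rw [show Aᵀ * A = Wᵀ * (V * Vᵀ * W) by simp [hA, transpose_mul, Matrix.mul_assoc],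
    charpoly_mul_comm_of_le _ _ hι, Matrix.mul_assoc]

theorem of_mul_transpose_fin_two {R m : Type*} [CommSemiring R] [Fintype m] (a b : m → R) :
    of ![a, b] * (of ![a, b])ᵀ = !![a ⬝ᵥ a, a ⬝ᵥ b; b ⬝ᵥ a, b ⬝ᵥ b] := by
  ext i j
  fin_cases i <;> fin_cases j <;> rfl

section FirstColumn

variable {R : Type*} [CommSemiring R] {m p : ℕ}

theorem eq_transpose_mul_of_col_zero_of_col_succ {A : Matrix (Fin m) (Fin (p + 1)) R}
    {a b : Fin m → R} (ha : ∀ j, A j 0 = a j) (hb : ∀ j (i : Fin p), A j i.succ = b j) :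
    A = (of ![a, b])ᵀ * of ![(vecCons 1 0 : Fin (p + 1) → R), vecCons 0 1] := by
  ext j i
  cases i using Fin.cases <;> simp [mul_apply, Fin.sum_univ_two, ha, hb]

theorem of_cons_mul_transpose_cons :
    of ![(vecCons 1 0 : Fin (p + 1) → R), vecCons 0 1] *
      (of ![(vecCons 1 0 : Fin (p + 1) → R), vecCons 0 1])ᵀ = !![1, 0; 0, (p : R)] := by
  rw [of_mul_transpose_fin_two]
  simp

end FirstColumn

noncomputable def unitHeadVec (m k : ℕ) : Fin m → ℝ := fun j => if (j : ℕ) < k then 1 / √k else 0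

theorem unitHeadVec_self (m : ℕ) (j : Fin m) : unitHeadVec m m j = 1 / √m :=
  if_pos j.isLt

theorem unitHeadVec_dotProduct_unitHeadVec {m k l : ℕ} (hkl : k ≤ l) (hlm : l ≤ m) :
    unitHeadVec m k ⬝ᵥ unitHeadVec m l = √(k / l) := by
  have hterm : ∀ j : Fin m, unitHeadVec m k j * unitHeadVec m l j
      = if (j : ℕ) < k then 1 / √k * (1 / √l) else 0 := fun j => by
    by_cases hj : (j : ℕ) < k
    · simp [unitHeadVec, hj, hj.trans_le hkl]
    · simp [unitHeadVec, hj]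
  rw [dotProduct, Finset.sum_congr rfl fun j _ => hterm j, Finset.sum_ite,
    Finset.sum_const_zero, add_zero, Finset.sum_const, Fin.card_filter_val_lt,
    min_eq_right (hkl.trans hlm), nsmul_eq_mul, Real.sqrt_div' _ (Nat.cast_nonneg l), ← mul_assoc,
    mul_one_div (k : ℝ), Real.div_sqrt, mul_one_div]

theorem of_unitHeadVec_mul_transpose {m k : ℕ} (hk : 0 < k) (hkm : k ≤ m) :
    of ![unitHeadVec m k, unitHeadVec m m] * (of ![unitHeadVec m k, unitHeadVec m m])ᵀ
      = !![1, √(k / m); √(k / m), 1] := by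
  have hk' : (k : ℝ) ≠ 0 := by exact_mod_cast hk.ne'
  have hm' : (m : ℝ) ≠ 0 := by exact_mod_cast (hk.trans_le hkm).ne'
  rw [of_mul_transpose_fin_two, dotProduct_comm (unitHeadVec m m),
    unitHeadVec_dotProduct_unitHeadVec le_rfl hkm, unitHeadVec_dotProduct_unitHeadVec hkm le_rfl,
    unitHeadVec_dotProduct_unitHeadVec le_rfl le_rfl, div_self hm', div_self hk',
    Real.sqrt_one]

theorem charpoly_fin_two_mul_diagonal {R : Type*} [CommRing R] [Nontrivial R] (c d : R) :
    (!![1, c; c, 1] * !![1, 0; 0, d]).charpoly = X ^ 2 - C (1 + d) * X + C (d * (1 - c ^ 2)) := by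
  rw [charpoly_fin_two]
  simp [trace_fin_two, det_fin_two]
  ring

theorem X_sq_sub_C_mul_X_add_C_eq_of_vieta {R : Type*} [CommRing R] {b c l₁ l₂ : R}
    (hb : l₁ + l₂ = b) (hc : l₁ * l₂ = c) :
    X ^ 2 - C b * X + C c = (X - C l₁) * (X - C l₂) := by
  subst hb hc
  simp only [C_add, C_mul]
  ring

theorem quadratic_roots_spec {b c l₁ l₂ : ℝ} (hb : 0 < b) (hc : 0 < c) (hd : 0 < b ^ 2 - 4 * c)
    (h₁ : l₁ = (b + √(b ^ 2 - 4 * c)) / 2) (h₂ : l₂ = (b - √(b ^ 2 - 4 * c)) / 2) :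
    l₁ + l₂ = b ∧ l₁ * l₂ = c ∧ 0 < l₁ ∧ 0 < l₂ ∧ l₁ ≠ l₂ := by
  have hsqrt : 0 < √(b ^ 2 - 4 * c) := Real.sqrt_pos.mpr hd
  have hmul : l₁ * l₂ = c := by
    rw [h₁, h₂]
    linear_combination (-1 / 4 : ℝ) * Real.sq_sqrt hd.le
  have hl₁ : 0 < l₁ := by rw [h₁]; positivity
  refine ⟨by rw [h₁, h₂]; ring, hmul, hl₁, pos_of_mul_pos_right (hmul ▸ hc) hl₁.le, ?_⟩
  rw [h₁, h₂]
  intro h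
  linarith

theorem sq_mul_sub_one_mul_sq_sub_of_vieta {k m n l₁ l₂ : ℝ} (hm : m ≠ 0) (hsum : l₁ + l₂ = n)
    (hprod : l₁ * l₂ = (n - 1) * (1 - k / m)) :
    ((l₁ - 1) * (l₂ - 1)) ^ 2 * (m - k) ^ 2 = k ^ 2 * (l₁ * l₂) ^ 2 := by
  have h : (l₁ - 1) * (l₂ - 1) = -((n - 1) * k / m) := by linear_combination hprod - hsum
  rw [h, hprod]
  field_simp

theorem gram_charpoly_two_center_matrix_general {k m n : ℕ}
    (hk : 0 < k) (hkm : k < m) (hn : 2 ≤ n)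
    (A : Matrix (Fin m) (Fin n) ℝ)
    (hA1 : ∀ (j : Fin m) (i : Fin n), (i : ℕ) = 0 →
      A j i = if (j : ℕ) < k then 1 / Real.sqrt k else 0)
    (hA2 : ∀ (j : Fin m) (i : Fin n), (i : ℕ) ≠ 0 → A j i = 1 / Real.sqrt m)
    (lam1 lam2 : ℝ)
    (h1 : lam1 = ((n : ℝ) +
      Real.sqrt ((n : ℝ) ^ 2 - 4 * ((n : ℝ) - 1) * (1 - (k : ℝ) / m))) / 2)
    (h2 : lam2 = ((n : ℝ) -
      Real.sqrt ((n : ℝ) ^ 2 - 4 * ((n : ℝ) - 1) * (1 - (k : ℝ) / m))) / 2) :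
    (Aᵀ * A).charpoly = (X - C lam1) * (X - C lam2) * X ^ (n - 2) ∧
    lam1 ≠ 0 ∧ lam2 ≠ 0 ∧ lam1 ≠ lam2 ∧
    ((lam1 - 1) * (lam2 - 1)) ^ 2 * ((m : ℝ) - k) ^ 2 = (k : ℝ) ^ 2 * (lam1 * lam2) ^ 2 := by
  have hkR : (0 : ℝ) < k := by exact_mod_cast hk
  have hkmR : (k : ℝ) < m := by exact_mod_cast hkm
  have hmR : (0 : ℝ) < m := hkR.trans hkmR
  have hq : 0 < (k : ℝ) / m := div_pos hkR hmR
  have hq1 : (k : ℝ) / m < 1 := (div_lt_one hmR).mpr hkmR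
  have hn1 : (0 : ℝ) < n - 1 := by
    have : (2 : ℝ) ≤ n := by exact_mod_cast hn
    linarith
  obtain ⟨hsum, hprod, hpos₁, hpos₂, hne⟩ :=
    quadratic_roots_spec (l₁ := lam1) (l₂ := lam2) (b := n) (c := (n - 1) * (1 - k / m))
      (by positivity) (mul_pos hn1 (by linarith))
      (by nlinarith [sq_nonneg ((n : ℝ) - 2), mul_pos hn1 hq])
      (by rw [h1, mul_assoc]) (by rw [h2, mul_assoc])
  refine ⟨?_, hpos₁.ne', hpos₂.ne', hne,
    sq_mul_sub_one_mul_sq_sub_of_vieta hmR.ne' hsum hprod⟩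
  obtain ⟨p, rfl⟩ : ∃ p, n = p + 1 := ⟨n - 1, by omega⟩
  have hA : A = (of ![unitHeadVec m k, unitHeadVec m m])ᵀ *
      of ![(vecCons 1 0 : Fin (p + 1) → ℝ), vecCons 0 1] :=
    eq_transpose_mul_of_col_zero_of_col_succ (fun j => hA1 j 0 rfl) fun j i => by
      rw [hA2 j i.succ (Nat.succ_ne_zero i), unitHeadVec_self]
  rw [charpoly_transpose_mul_self_eq_X_pow_mul hA (by simp; omega),
    of_unitHeadVec_mul_transpose hk hkm.le, of_cons_mul_transpose_cons,
    charpoly_fin_two_mul_diagonal, Real.sq_sqrt hq.le,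
    X_sq_sub_C_mul_X_add_C_eq_of_vieta (by rw [hsum]; push_cast; ring)
      (by rw [hprod]; push_cast; ring), Fintype.card_fin, Fintype.card_fin, mul_comm]

/-- **Spectrum of the Gram matrix of the two-center valuation matrix.** For the `m × n` matrix
`A` whose first column is `1/√k` on the first `k` rows and `0` elsewhere, and whose remaining
`n − 1` columns are the uniform vector `1/√m` (with `k ∣ m`, `k < m`, `n ≥ 2`), the matrix `AᵀA`
has exactly two nonzero eigenvalues `λ₁,₂ = (n ± √(n² − 4(n−1)(1 − k/m)))/2`, each of
multiplicity `1`: its characteristic polynomial is `(X − λ₁)(X − λ₂)·X^{n−2}` with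
`λ₁ ≠ λ₂`, both nonzero. Moreover `((λ₁−1)(λ₂−1))²(m−k)² = k²(λ₁λ₂)²`. -/
theorem gram_charpoly_two_center_matrix {k m n : ℕ}
    (hk : 0 < k) (hdvd : k ∣ m) (hkm : k < m) (hn : 2 ≤ n)
    (A : Matrix (Fin m) (Fin n) ℝ)
    (hA1 : ∀ (j : Fin m) (i : Fin n), (i : ℕ) = 0 →
      A j i = if (j : ℕ) < k then 1 / Real.sqrt k else 0)
    (hA2 : ∀ (j : Fin m) (i : Fin n), (i : ℕ) ≠ 0 → A j i = 1 / Real.sqrt m)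
    (lam1 lam2 : ℝ)
    (h1 : lam1 = ((n : ℝ) +
      Real.sqrt ((n : ℝ) ^ 2 - 4 * ((n : ℝ) - 1) * (1 - (k : ℝ) / m))) / 2)
    (h2 : lam2 = ((n : ℝ) -
      Real.sqrt ((n : ℝ) ^ 2 - 4 * ((n : ℝ) - 1) * (1 - (k : ℝ) / m))) / 2) :
    (Aᵀ * A).charpoly = (X - C lam1) * (X - C lam2) * X ^ (n - 2) ∧
    lam1 ≠ 0 ∧ lam2 ≠ 0 ∧ lam1 ≠ lam2 ∧
    ((lam1 - 1) * (lam2 - 1)) ^ 2 * ((m : ℝ) - k) ^ 2 = (k : ℝ) ^ 2 * (lam1 * lam2) ^ 2 :=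
  gram_charpoly_two_center_matrix_general hk hkm hn A hA1 hA2 lam1 lam2 h1 h2
end
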